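/- arXiv:2111.01661 — 11 statements merged into one kernel-verified Lean document; each statement's English description precedes it below -/
import Mathlib

section
/- Let q = 2n+1 be an odd prime power, let d ∈ F_q^× be a non-square (d ∉ F_q^{×2}), and let r be an integer with 1 ≤ r ≤ q-2 such that r ≡ n (mod 2). Then S_q(r,d) = 0. -/
/-! Let `M` be the matrix and `σ` the permutation of the indices induced by multiplication by `d²`
on the nonzero squares. Since `d² α j + d α i = d (α i + d α j)`, permuting the columns of `Mᵀ` by
`σ` gives `χ^r(d) • M`, whence `sign σ · det M = χ^r(d)^n · det M`.

By Euler's criterion `d^n = -1`, and `χ(-1) = -1` because `χ^n` is nontrivial while every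
`u^n = ±1`; so `χ^r(d)^n = (-1)^r`. The nonzero squares form a cyclic group of order `n` generated
by `g²` for a generator `g` of `F_qˣ`, and `d² = (g²)^m` with `m` odd because `d = g^m` is not a
square. Multiplication by a generator is an `n`-cycle, so `sign σ = (-(-1)^n)^m = -(-1)^n`. As
`r ≡ n (mod 2)`, this gives `det M = -det M`. -/

theorem Equiv.Perm.sign_of_isCycleOn_univ {α : Type*} [Fintype α] [DecidableEq α] [Nonempty α]
    {f : Equiv.Perm α} (hf : f.IsCycleOn _root_.Set.univ) :
    Equiv.Perm.sign f = -(-1) ^ Fintype.card α := by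
  rcases (_root_.Set.univ : Set α).subsingleton_or_nontrivial with hs | hs
  · have : Subsingleton α := Set.subsingleton_univ_iff.mp hs
    have : Unique α := uniqueOfSubsingleton (Classical.arbitrary α)
    rw [Subsingleton.elim f 1, Fintype.card_unique]
    simp
  · have hcycle : f.IsCycle :=
      isCycle_iff_exists_isCycleOn.mpr ⟨_, hs, hf, fun x _ => _root_.Set.mem_univ x⟩
    have hsupport : f.support = Finset.univ :=
      Finset.eq_univ_of_forall fun x => mem_support.mpr (hf.apply_ne hs (_root_.Set.mem_univ x))
    rw [hcycle.sign, hsupport, Finset.card_univ]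

theorem mem_zpowers_sq_iff_isSquare {G : Type*} [Group G] {g x : G}
    (hg : ∀ y, y ∈ Subgroup.zpowers g) : x ∈ Subgroup.zpowers (g ^ 2) ↔ IsSquare x := by
  have hsq : ∀ k : ℤ, (g ^ 2) ^ k = g ^ k * g ^ k := fun k => by
    rw [← zpow_add, ← two_mul, zpow_mul, zpow_ofNat]
  constructor
  · intro hx
    obtain ⟨k, rfl⟩ := Subgroup.mem_zpowers_iff.mp hx
    exact ⟨g ^ k, hsq k⟩
  · rintro ⟨y, rfl⟩
    obtain ⟨k, rfl⟩ := Subgroup.mem_zpowers_iff.mp (hg y)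
    exact Subgroup.mem_zpowers_iff.mpr ⟨k, hsq k⟩

section CyclicGroup

variable {G : Type*} [Group G] [Fintype G] [DecidableEq G] {γ : G}

theorem sign_toPerm_of_forall_mem_zpowers (hγ : ∀ x, x ∈ Subgroup.zpowers γ) :
    Equiv.Perm.sign (MulAction.toPerm γ : Equiv.Perm G) = -(-1) ^ Fintype.card G := by
  refine Equiv.Perm.sign_of_isCycleOn_univ ⟨(MulAction.toPerm γ).bijOn fun _ => by simp,
    fun x _ y _ => ?_⟩
  obtain ⟨k, hk⟩ := Subgroup.mem_zpowers_iff.mp (hγ (y * x⁻¹))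
  refine ⟨k, ?_⟩
  rw [← MulAction.coe_toPermHom, ← map_zpow, MulAction.coe_toPermHom, MulAction.toPerm_apply,
    hk, smul_eq_mul, inv_mul_cancel_right]

theorem sign_toPerm_zpow_of_odd (hγ : ∀ x, x ∈ Subgroup.zpowers γ) {m : ℤ} (hm : Odd m) :
    Equiv.Perm.sign (MulAction.toPerm (γ ^ m) : Equiv.Perm G) = -(-1) ^ Fintype.card G := by
  have := map_zpow (Equiv.Perm.sign.comp (MulAction.toPermHom G G)) γ m
  simp only [MonoidHom.comp_apply, MulAction.coe_toPermHom] at this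
  rw [this, sign_toPerm_of_forall_mem_zpowers hγ]
  rcases Int.units_eq_one_or (-(-1) ^ Fintype.card G : ℤˣ) with h | h <;> rw [h]
  · exact one_zpow m
  · exact hm.neg_one_zpow

end CyclicGroup

theorem Matrix.det_eq_zero_of_transpose_submatrix_eq_smul {ι R : Type*} [Fintype ι]
    [DecidableEq ι] [CommRing R] [NoZeroDivisors R] [CharZero R] {M : Matrix ι ι R}
    {σ : Equiv.Perm ι} {c : R} (h : M.transpose.submatrix id σ = c • M)
    (hc : c ^ Fintype.card ι = -(Equiv.Perm.sign σ : R)) : M.det = 0 := by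
  have hdet := congrArg Matrix.det h
  rw [det_permute', det_transpose, det_smul, hc, neg_mul, CharZero.eq_neg_self_iff,
    mul_eq_zero] at hdet
  exact hdet.resolve_left (by simp)

theorem Units.isSquare_val_iff {G₀ : Type*} [GroupWithZero G₀] {u : G₀ˣ} :
    IsSquare (u : G₀) ↔ IsSquare u := by
  refine ⟨fun ⟨y, hy⟩ => ?_, fun hu => hu.map (Units.coeHom G₀)⟩
  have hy0 : y ≠ 0 := by rintro rfl; simp at hy
  exact ⟨Units.mk0 y hy0, Units.ext hy⟩

section FiniteField

variable {F : Type*} [Field F] [Fintype F]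

theorem FiniteField.pow_card_div_two_eq_neg_one (hF : ringChar F ≠ 2) {a : F}
    (ha : ¬IsSquare a) : a ^ (Fintype.card F / 2) = -1 := by
  have ha0 : a ≠ 0 := by rintro rfl; exact ha ⟨0, (mul_zero 0).symm⟩
  exact (FiniteField.pow_dichotomy hF ha0).resolve_left
    fun h => ha ((FiniteField.isSquare_iff hF ha0).mpr h)

theorem MulChar.apply_neg_one_of_orderOf_eq {R : Type*} [CommRing R] [NoZeroDivisors R]
    (hF : ringChar F ≠ 2) {χ : MulChar F R} (hχ : orderOf χ = Fintype.card F - 1) :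
    χ (-1) = -1 := by
  have hsq : χ (-1) * χ (-1) = 1 := by rw [← map_mul, neg_one_mul, neg_neg, map_one]
  refine (mul_self_eq_one_iff.mp hsq).resolve_left fun h => ?_
  have htriv : χ ^ (Fintype.card F / 2) = 1 := MulChar.ext fun u => by
    rw [MulChar.pow_apply_coe, MulChar.one_apply_coe, ← map_pow]
    rcases FiniteField.pow_dichotomy hF u.ne_zero with hu | hu <;> simp [hu, h]
  have hodd := Nat.two_mul_odd_div_two (FiniteField.odd_card_of_char_ne_two hF)
  have hpos : 0 < Fintype.card F / 2 := Nat.div_pos Fintype.one_lt_card two_pos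
  have := Nat.le_of_dvd hpos (hχ ▸ orderOf_dvd_of_pow_eq_one htriv)
  omega

theorem exists_perm_mul_sq_of_not_isSquare {ι : Type*} [Fintype ι] [DecidableEq ι]
    {α : ι → F} (hα : Function.Injective α)
    (hrange : Set.range α = {x : F | x ≠ 0 ∧ IsSquare x}) {d : F} (hd : ¬IsSquare d) :
    ∃ σ : Equiv.Perm ι, (∀ i, α (σ i) = d ^ 2 * α i) ∧
      Equiv.Perm.sign σ = -(-1) ^ Fintype.card ι := by
  classical
  obtain ⟨g, hg⟩ := IsCyclic.exists_generator (α := Fˣ)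
  set H := Subgroup.zpowers (g ^ 2)
  have hmemH : ∀ u : Fˣ, u ∈ H ↔ IsSquare (u : F) := fun u =>
    (mem_zpowers_sq_iff_isSquare hg).trans Units.isSquare_val_iff.symm
  have hαH : ∀ i, ∃ h : α i ≠ 0, Units.mk0 (α i) h ∈ H := fun i => by
    have hi : α i ∈ Set.range α := ⟨i, rfl⟩
    rw [hrange] at hi
    exact ⟨hi.1, (hmemH _).mpr hi.2⟩
  choose hα0 hαmem using hαH
  let e : ι ≃ H := Equiv.ofBijective (fun i => ⟨Units.mk0 (α i) (hα0 i), hαmem i⟩) <| by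
    refine ⟨fun i j hij => hα (by simpa using congrArg (fun u : H => ((u : Fˣ) : F)) hij),
      fun u => ?_⟩
    obtain ⟨i, hi⟩ : ((u : Fˣ) : F) ∈ Set.range α := by
      rw [hrange]; exact ⟨u.1.ne_zero, (hmemH u).mp u.2⟩
    exact ⟨i, Subtype.ext (Units.ext hi)⟩
  have hd0 : d ≠ 0 := by rintro rfl; exact hd ⟨0, (mul_zero 0).symm⟩
  obtain ⟨m, hm⟩ := Subgroup.mem_zpowers_iff.mp (hg (Units.mk0 d hd0))
  have hmodd : Odd m := Int.not_even_iff_odd.mp fun ⟨k, hk⟩ =>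
    hd ⟨(g ^ k : Fˣ), by rw [← Units.val_mul, ← zpow_add, ← hk, hm, Units.val_mk0]⟩
  let γ : H := ⟨g ^ 2, Subgroup.mem_zpowers _⟩
  have hγ : ∀ x : H, x ∈ Subgroup.zpowers γ := fun ⟨x, k, hk⟩ => ⟨k, Subtype.ext hk⟩
  refine ⟨e.symm.permCongr (MulAction.toPerm (γ ^ m)), fun i => ?_, ?_⟩
  · have hαe : ∀ x : H, α (e.symm x) = ((x : Fˣ) : F) := fun x =>
      congrArg (fun u : H => ((u : Fˣ) : F)) (e.apply_symm_apply x)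
    have hγm : (((γ ^ m : H) : Fˣ) : F) = d ^ 2 := by
      change (((g ^ 2) ^ m : Fˣ) : F) = d ^ 2
      rw [← zpow_natCast, ← zpow_mul, mul_comm, zpow_mul, hm, zpow_natCast,
        Units.val_pow_eq_pow_val, Units.val_mk0]
    rw [Equiv.permCongr_apply, Equiv.symm_symm, hαe, MulAction.toPerm_apply, smul_eq_mul,
      Subgroup.coe_mul, Units.val_mul, hγm]
    rfl
  · rw [Equiv.Perm.sign_permCongr, sign_toPerm_zpow_of_odd hγ hmodd, Fintype.card_congr e]

end FiniteField

theorem stmt_0_general (F : Type) [Field F] [Fintype F]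
    (n : ℕ) (hq : Fintype.card F = 2 * n + 1)
    (χ : MulChar F ℂ) (hχ : orderOf χ = 2 * n)
    (α : Fin n → F) (hαinj : Function.Injective α)
    (hαrange : Set.range α = {x : F | x ≠ 0 ∧ IsSquare x})
    (d : F) (hd : ¬ IsSquare d)
    (r : ℕ) (hrn : r % 2 = n % 2) :
    Matrix.det (Matrix.of fun i j : Fin n => (χ ^ r) (α i + d * α j)) = 0 := by
  have hF : ringChar F ≠ 2 := fun h => by
    have := FiniteField.even_card_of_char_two h
    omega
  have hχ_neg_one : (χ ^ r) (-1) = (-1) ^ r := by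
    simpa [MulChar.apply_neg_one_of_orderOf_eq hF (by omega : orderOf χ = _ - 1)]
      using MulChar.pow_apply_coe χ r (-1)
  have hd_pow : d ^ n = -1 := by
    simpa [hq, Nat.mul_add_div] using FiniteField.pow_card_div_two_eq_neg_one hF hd
  obtain ⟨σ, hσ, hsign⟩ := exists_perm_mul_sq_of_not_isSquare hαinj hαrange hd
  refine Matrix.det_eq_zero_of_transpose_submatrix_eq_smul (σ := σ) (c := (χ ^ r) d) ?_ ?_
  · ext i j
    simp only [Matrix.submatrix_apply, Matrix.transpose_apply, Matrix.of_apply, Matrix.smul_apply,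
      smul_eq_mul, id, hσ, ← map_mul]
    congr 1
    ring
  · rw [hsign, Fintype.card_fin, ← map_pow, hd_pow, hχ_neg_one, neg_one_pow_eq_pow_mod_two, hrn,
      ← neg_one_pow_eq_pow_mod_two]
    push_cast
    ring

/-- Let `q = 2n+1` be an odd prime power, `χ` a generator of the group of complex-valued
multiplicative characters of `F_q`, `α` an enumeration of the nonzero squares of `F_q`.
If `d ∈ F_q^×` is a non-square and `1 ≤ r ≤ q-2` with `r ≡ n (mod 2)`, then
`S_q(r,d) = det [χ^r(α_i + d·α_j)] = 0`. -/
theorem stmt_0 (F : Type) [Field F] [Fintype F] [DecidableEq F]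
    (n : ℕ) (hq : Fintype.card F = 2 * n + 1)
    (χ : MulChar F ℂ) (hχ : orderOf χ = 2 * n)
    (α : Fin n → F) (hαinj : Function.Injective α)
    (hαrange : Set.range α = {x : F | x ≠ 0 ∧ IsSquare x})
    (d : F) (hd0 : d ≠ 0) (hd : ¬ IsSquare d)
    (r : ℕ) (hr1 : 1 ≤ r) (hr2 : r ≤ 2 * n - 1) (hrn : r % 2 = n % 2) :
    Matrix.det (Matrix.of fun i j : Fin n => (χ ^ r) (α i + d * α j)) = 0 :=
  stmt_0_general F n hq χ hχ α hαinj hαrange d hd r hrn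
end

section
/- Let q = 2n+1 be an odd prime power with q ≡ 3 (mod 4), let d ∈ F_q^{×2} be a nonzero square, and let r be an integer with 1 ≤ r ≤ q-2. Then S_q(r,d) = S_q(r,1). -/
/-! Multiplication by the nonzero square `d` permutes the nonzero squares, hence permutes the
columns of the matrix `[χ^r(α_i + α_j)]` into `[χ^r(α_i + d α_j)]`. This permutation `σ` satisfies
`σ^n = 1` because `d^n = 1`, and `n = (q - 1)/2` is odd since `q ≡ 3 (mod 4)`, so `σ` is even and
the two determinants agree. -/

open Function Set

theorem Function.Injective.exists_perm_semiconj {ι α : Type*} [Finite ι] {f : ι → α}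
    (hf : Injective f) {g : α → α} (hg : Injective g) (hmaps : MapsTo g (range f) (range f)) :
    ∃ σ : Equiv.Perm ι, Semiconj f σ g := by
  choose τ hτ using fun i => hmaps (mem_range_self i)
  have hτ_inj : Injective τ := fun i j h => hf (hg (by rw [← hτ i, ← hτ j, h]))
  exact ⟨Equiv.ofBijective τ (Finite.injective_iff_bijective.mp hτ_inj), hτ⟩

theorem Equiv.Perm.pow_eq_one_of_semiconj {ι α : Type*} {f : ι → α} (hf : Injective f)
    {σ : Equiv.Perm ι} {g : α → α} (h : Semiconj f σ g) {n : ℕ} (hg : g^[n] = id) :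
    σ ^ n = 1 :=
  Equiv.ext fun i => hf <| by rw [Equiv.Perm.coe_pow, (h.iterate_right n) i, hg]; rfl

theorem Equiv.Perm.sign_eq_one_of_pow_eq_one_of_odd {α : Type*} [DecidableEq α] [Fintype α]
    {σ : Equiv.Perm α} {n : ℕ} (hn : Odd n) (h : σ ^ n = 1) : Equiv.Perm.sign σ = 1 := by
  rw [← pow_one (Equiv.Perm.sign σ), ← Nat.odd_iff.mp hn, ← Int.units_pow_eq_pow_mod_two,
    ← map_pow, h, map_one]

theorem FiniteField.pow_eq_one_of_isSquare {F : Type*} [Field F] [Fintype F] {n : ℕ}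
    (hq : Fintype.card F = 2 * n + 1) {d : F} (hd0 : d ≠ 0) (hd : IsSquare d) : d ^ n = 1 := by
  obtain ⟨c, rfl⟩ := hd
  have hc : c ≠ 0 := by rintro rfl; simp at hd0
  rw [← sq, ← pow_mul, ← FiniteField.pow_card_sub_one_eq_one c hc, hq, Nat.add_sub_cancel]

theorem stmt_1_general (F : Type) [Field F] [Fintype F]
    (n : ℕ) (hq : Fintype.card F = 2 * n + 1) (hq4 : (2 * n + 1) % 4 = 3)
    (χ : MulChar F ℂ)
    (α : Fin n → F) (hαinj : Function.Injective α)
    (hαrange : Set.range α = {x : F | x ≠ 0 ∧ IsSquare x})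
    (d : F) (hd0 : d ≠ 0) (hd : IsSquare d)
    (r : ℕ) :
    Matrix.det (Matrix.of fun i j : Fin n => (χ ^ r) (α i + d * α j)) =
      Matrix.det (Matrix.of fun i j : Fin n => (χ ^ r) (α i + α j)) := by
  have hn : Odd n := Nat.odd_iff.mpr (by omega)
  have hmaps : MapsTo (d * ·) (range α) (range α) := by
    rw [hαrange]
    exact fun x hx => ⟨mul_ne_zero hd0 hx.1, hd.mul hx.2⟩
  obtain ⟨σ, hσ⟩ := hαinj.exists_perm_semiconj (mul_right_injective₀ hd0) hmaps
  have hσn : σ ^ n = 1 := Equiv.Perm.pow_eq_one_of_semiconj hαinj hσ <| by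
    rw [mul_left_iterate, FiniteField.pow_eq_one_of_isSquare hq hd0 hd]; exact funext one_mul
  have hcols : (Matrix.of fun i j : Fin n => (χ ^ r) (α i + d * α j)) =
      (Matrix.of fun i j : Fin n => (χ ^ r) (α i + α j)).submatrix id σ := by
    ext i j
    simp [hσ j]
  rw [hcols, Matrix.det_permute', Equiv.Perm.sign_eq_one_of_pow_eq_one_of_odd hn hσn]
  simp

/-- Let `q = 2n+1` be an odd prime power with `q ≡ 3 (mod 4)`, `χ` a generator of the group of
complex-valued multiplicative characters of `F_q`, `α` an enumeration of the nonzero squares of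
`F_q`. If `d` is a nonzero square and `1 ≤ r ≤ q-2`, then `S_q(r,d) = S_q(r,1)`. -/
theorem stmt_1 (F : Type) [Field F] [Fintype F] [DecidableEq F]
    (n : ℕ) (hq : Fintype.card F = 2 * n + 1) (hq4 : (2 * n + 1) % 4 = 3)
    (χ : MulChar F ℂ) (hχ : orderOf χ = 2 * n)
    (α : Fin n → F) (hαinj : Function.Injective α)
    (hαrange : Set.range α = {x : F | x ≠ 0 ∧ IsSquare x})
    (d : F) (hd0 : d ≠ 0) (hd : IsSquare d)
    (r : ℕ) (hr1 : 1 ≤ r) (hr2 : r ≤ 2 * n - 1) :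
    Matrix.det (Matrix.of fun i j : Fin n => (χ ^ r) (α i + d * α j)) =
      Matrix.det (Matrix.of fun i j : Fin n => (χ ^ r) (α i + α j)) :=
  stmt_1_general F n hq hq4 χ α hαinj hαrange d hd0 hd r
end

section
/- Let q = 2n+1 be an odd prime power with q ≡ 1 (mod 4), let d ∈ F_q^{×2} be a nonzero square, and let r be an integer with 1 ≤ r ≤ q-2. Then S_q(r,d) = δ_d · S_q(r,1), where δ_d = 1 if d = c^4 for some c ∈ F_q^× and δ_d = -1 otherwise. -/
/-! Multiplication by `d` permutes the nonzero squares, so the matrix for `d` is the matrix for `1`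
with its columns permuted, and `δ_d` is the sign of `x ↦ d x` on the cyclic group of squares of
`F_qˣ`, of even order `n`. A generator of a cyclic group of even order acts as one cycle of even
length, hence oddly; so the sign of `x ↦ g x` is `1` exactly on the squares of that group, which
are the fourth powers of `F_qˣ`. -/

open Equiv

theorem Matrix.det_of_add_mul_eq_sign_mul {ι K R : Type*} [Fintype ι] [DecidableEq ι]
    [Add K] [Mul K] [CommRing R] (f : K → R) (α : ι → K) (d : K) (σ : Perm ι)
    (hσ : ∀ j, α (σ j) = d * α j) :
    det (of fun i j => f (α i + d * α j)) =
      Perm.sign σ * det (of fun i j => f (α i + α j)) := by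
  rw [← det_permute']
  congr 1
  ext i j
  simp [hσ]

theorem sign_mulLeft_of_forall_mem_zpowers {G : Type*} [Group G] [Fintype G] [DecidableEq G]
    {u : G} (hu : ∀ x, x ∈ Subgroup.zpowers u) (hu1 : u ≠ 1) :
    Perm.sign (Equiv.mulLeft u) = -(-1) ^ Fintype.card G := by
  have hcycle : (Equiv.mulLeft u).IsCycle := by
    refine ⟨1, by simpa using hu1, fun y _ => ?_⟩
    obtain ⟨i, rfl⟩ := Subgroup.mem_zpowers_iff.mp (hu y)
    exact ⟨i, by simp⟩
  have hsupport : (Equiv.mulLeft u).support = Finset.univ := by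
    ext x
    simpa using hu1
  rw [hcycle.sign, hsupport, Finset.card_univ]

theorem sign_mulLeft_of_even_card {G : Type*} [Group G] [IsCyclic G] [Fintype G] [DecidableEq G]
    (hG : Even (Fintype.card G)) (g : G) :
    Perm.sign (Equiv.mulLeft g) = if IsSquare g then 1 else -1 := by
  split_ifs with hg
  · obtain ⟨h, rfl⟩ := hg
    rw [Equiv.mulLeft_mul, Perm.sign_mul, Int.units_mul_self]
  · obtain ⟨u, hu⟩ := IsCyclic.exists_generator (α := G)
    have hu1 : u ≠ 1 := by
      rintro rfl
      have : Fintype.card G = 1 :=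
        Fintype.card_eq_one_iff.mpr ⟨1, fun x => Subgroup.mem_bot.mp (by simpa using hu x)⟩
      simp [this] at hG
    obtain ⟨k, rfl⟩ := mem_powers_iff_mem_zpowers.mpr (hu g)
    have hk : Odd k := Nat.not_even_iff_odd.mp fun hk => hg (hk.isSquare_pow u)
    rw [← Equiv.pow_mulLeft, map_pow, sign_mulLeft_of_forall_mem_zpowers hu hu1, hG.neg_one_pow,
      hk.neg_pow, one_pow]

section Squares

variable {M₀ : Type*} [CommGroupWithZero M₀]

def nonzeroSquaresEquivSquareUnits :
    {x : M₀ | x ≠ 0 ∧ IsSquare x} ≃ Subgroup.square M₀ˣ where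
  toFun x := ⟨Units.mk0 x.1 x.2.1, by
    obtain ⟨r, hr⟩ := x.2.2
    have hr0 : r ≠ 0 := by rintro rfl; exact x.2.1 (by simpa using hr)
    exact ⟨Units.mk0 r hr0, Units.ext hr⟩⟩
  invFun u := ⟨u.1, u.1.ne_zero, u.2.map (Units.coeHom M₀)⟩
  left_inv _ := rfl
  right_inv _ := by ext; rfl

theorem isSquare_square_units_iff (u : Subgroup.square M₀ˣ) :
    IsSquare u ↔ ∃ c : M₀, c ≠ 0 ∧ c ^ 4 = ((u : M₀ˣ) : M₀) := by
  constructor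
  · rintro ⟨⟨h, w, hw⟩, rfl⟩
    refine ⟨w, w.ne_zero, ?_⟩
    simp only [Subgroup.coe_mul, hw, Units.val_mul, pow_succ, pow_zero, one_mul, mul_assoc]
  · rintro ⟨c, hc0, hc⟩
    refine ⟨⟨Units.mk0 c hc0 ^ 2, IsSquare.sq _⟩, Subtype.ext (Units.ext ?_)⟩
    simp only [Subgroup.coe_mul, Units.val_mul, Units.val_mk0, ← hc, pow_succ, pow_zero, one_mul,
      mul_assoc]

end Squares

theorem stmt_2_general (F : Type) [Field F] [Fintype F] [DecidableEq F]
    (n : ℕ) (hq4 : (2 * n + 1) % 4 = 1)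
    (χ : MulChar F ℂ)
    (α : Fin n → F) (hαinj : Function.Injective α)
    (hαrange : Set.range α = {x : F | x ≠ 0 ∧ IsSquare x})
    (d : F) (hd0 : d ≠ 0) (hd : IsSquare d)
    (r : ℕ) :
    Matrix.det (Matrix.of fun i j : Fin n => (χ ^ r) (α i + d * α j)) =
      (if ∃ c : F, c ≠ 0 ∧ c ^ 4 = d then (1 : ℂ) else -1) *
        Matrix.det (Matrix.of fun i j : Fin n => (χ ^ r) (α i + α j)) := by
  classical
  obtain ⟨e, he⟩ : ∃ e : Fin n ≃ Subgroup.square Fˣ, ∀ j, ((e j : Fˣ) : F) = α j :=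
    ⟨(Equiv.ofInjective α hαinj).trans ((Equiv.setCongr hαrange).trans
      nonzeroSquaresEquivSquareUnits), fun _ => rfl⟩
  obtain ⟨δ, hδ⟩ : ∃ δ : Subgroup.square Fˣ, ((δ : Fˣ) : F) = d :=
    ⟨nonzeroSquaresEquivSquareUnits ⟨d, hd0, hd⟩, rfl⟩
  have hσ : ∀ j, α (e.symm.permCongr (Equiv.mulLeft δ) j) = d * α j := by
    intro j
    rw [← he, ← he, Equiv.permCongr_apply, Equiv.symm_symm, Equiv.apply_symm_apply,
      Equiv.coe_mulLeft, Subgroup.coe_mul, Units.val_mul, hδ]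
  have hcard : Even (Fintype.card (Subgroup.square Fˣ)) := by
    rw [← Fintype.card_congr e, Fintype.card_fin]
    exact ⟨n / 2, by omega⟩
  rw [Matrix.det_of_add_mul_eq_sign_mul _ α d _ hσ, Perm.sign_permCongr,
    sign_mulLeft_of_even_card hcard]
  simp only [isSquare_square_units_iff, hδ]
  split_ifs <;> simp

/-- Let `q = 2n+1` be an odd prime power with `q ≡ 1 (mod 4)`, `χ` a generator of the group of
complex-valued multiplicative characters of `F_q`, `α` an enumeration of the nonzero squares of
`F_q`. If `d` is a nonzero square and `1 ≤ r ≤ q-2`, then `S_q(r,d) = δ_d · S_q(r,1)`, where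
`δ_d = 1` if `d` is a fourth power in `F_q^×` and `δ_d = -1` otherwise. -/
theorem stmt_2 (F : Type) [Field F] [Fintype F] [DecidableEq F]
    (n : ℕ) (hq : Fintype.card F = 2 * n + 1) (hq4 : (2 * n + 1) % 4 = 1)
    (χ : MulChar F ℂ) (hχ : orderOf χ = 2 * n)
    (α : Fin n → F) (hαinj : Function.Injective α)
    (hαrange : Set.range α = {x : F | x ≠ 0 ∧ IsSquare x})
    (d : F) (hd0 : d ≠ 0) (hd : IsSquare d)
    (r : ℕ) (hr1 : 1 ≤ r) (hr2 : r ≤ 2 * n - 1) :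
    Matrix.det (Matrix.of fun i j : Fin n => (χ ^ r) (α i + d * α j)) =
      (if ∃ c : F, c ≠ 0 ∧ c ^ 4 = d then (1 : ℂ) else -1) *
        Matrix.det (Matrix.of fun i j : Fin n => (χ ^ r) (α i + α j)) :=
  stmt_2_general F n hq4 χ α hαinj hαrange d hd0 hd r
end

section
/- Let q = 2n+1 be an odd prime power and let r be an integer with 1 ≤ r ≤ q-2. Then S_q(r,1) = (-1)^{r(n-1)} · ∏_{k=1}^{n} λ_k, where for each 1 ≤ k ≤ n, λ_k = Σ_{j=1}^{n} χ^r(1 + α_j) · χ^{k-r}(α_j). -/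
/-!
Write `C_s` for the matrix `(χ^(k+s)(α_j))_{j, 0 ≤ k < n}`. Substituting `α_j ↦ α_i α_j` in the row sums
of `M = (χ^r(α_i + α_j))` gives `M C_{1-r} = C_1 diag(λ_1, …, λ_n)`. Since `χ^n` is trivial on
squares, `C_{s-1}` is `C_s` with its columns rotated cyclically, so
`det C_1 = (-1)^{r(n-1)} det C_{1-r}`; and `C_s` is invertible by orthogonality of the characters
`χ^m` on the group of squares.
-/

namespace MulChar

variable {F K : Type*} [Field F] [Field K]

theorem sq_eq_one_iff_forall_isSquare {ψ : MulChar F K} :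
    ψ ^ 2 = 1 ↔ ∀ x : F, x ≠ 0 → IsSquare x → ψ x = 1 := by
  constructor
  · rintro h x hx ⟨y, rfl⟩
    have hy : y ≠ 0 := by rintro rfl; simp at hx
    rw [map_mul, ← sq, ← pow_apply' ψ two_ne_zero, h, one_apply (isUnit_iff_ne_zero.mpr hy)]
  · intro h
    ext a
    rw [pow_apply' ψ two_ne_zero, one_apply_coe, sq, ← map_mul]
    exact h _ (by simp) ⟨a, rfl⟩

theorem zpow_sq_eq_one_iff {χ : MulChar F K} {n : ℕ} (hχ : orderOf χ = 2 * n) (m : ℤ) :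
    (χ ^ m) ^ 2 = 1 ↔ (n : ℤ) ∣ m := by
  rw [← zpow_natCast, ← zpow_mul, ← orderOf_dvd_iff_zpow_eq_one, hχ, mul_comm m]
  push_cast
  exact mul_dvd_mul_iff_left two_ne_zero

theorem zpow_add_apply_of_isSquare {χ : MulChar F K} {n : ℕ} (hχ : orderOf χ = 2 * n) (m : ℤ)
    {x : F} (hx : x ≠ 0) (hxs : IsSquare x) : (χ ^ (m + n)) x = (χ ^ m) x := by
  have hn : (χ ^ (n : ℤ)) x = 1 :=
    sq_eq_one_iff_forall_isSquare.mp ((zpow_sq_eq_one_iff hχ n).mpr dvd_rfl) x hx hxs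
  rw [zpow_add, mul_apply, hn, mul_one]

end MulChar

theorem Fin.prod_univ_add_one_eq_prod_Icc {M : Type*} [CommMonoid M] (f : ℕ → M) (n : ℕ) :
    ∏ k : Fin n, f (k + 1) = ∏ k ∈ Finset.Icc 1 n, f k := by
  rw [Fin.prod_univ_eq_prod_range (fun k => f (k + 1)), Finset.range_eq_Ico,
    Finset.prod_Ico_add', zero_add, Finset.Ico_add_one_right_eq_Icc]

section SquareEnumeration

variable {F : Type*} [Field F] {ι : Type*} {α : ι → F}

theorem mem_of_range_eq_squares (hrange : Set.range α = {x | x ≠ 0 ∧ IsSquare x}) (j : ι) :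
    α j ≠ 0 ∧ IsSquare (α j) := by
  simpa [hrange] using Set.mem_range_self (f := α) j

variable [Fintype ι]

theorem sum_comp_mul_of_range_eq_squares {M : Type*} [AddCommMonoid M]
    (hα : Function.Injective α) (hrange : Set.range α = {x | x ≠ 0 ∧ IsSquare x})
    {c : F} (hc : c ≠ 0) (hcs : IsSquare c) (f : F → M) :
    ∑ j, f (c * α j) = ∑ j, f (α j) := by
  have hmem : ∀ j, c * α j ∈ Set.range α := fun j => by
    obtain ⟨h0, hs⟩ := mem_of_range_eq_squares hrange j
    rw [hrange]
    exact ⟨mul_ne_zero hc h0, hcs.mul hs⟩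
  choose g hg using hmem
  have hg_inj : Function.Injective g := fun a b hab =>
    hα (mul_left_cancel₀ hc (by rw [← hg a, ← hg b, hab]))
  exact Fintype.sum_bijective g (Finite.injective_iff_bijective.mp hg_inj) _ _
    fun j => by rw [hg]

variable {K : Type*} [Field K]

theorem sum_mulChar_eq_zero_of_range_eq_squares (hα : Function.Injective α)
    (hrange : Set.range α = {x | x ≠ 0 ∧ IsSquare x}) {ψ : MulChar F K}
    {c : F} (hc : c ≠ 0) (hcs : IsSquare c) (hψc : ψ c ≠ 1) :
    ∑ j, ψ (α j) = 0 := by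
  have hinv : ∑ j, ψ (α j) = ψ c * ∑ j, ψ (α j) :=
    calc ∑ j, ψ (α j) = ∑ j, ψ (c * α j) :=
          (sum_comp_mul_of_range_eq_squares hα hrange hc hcs ψ).symm
      _ = ψ c * ∑ j, ψ (α j) := by simp only [map_mul, Finset.mul_sum]
  have : (ψ c - 1) * ∑ j, ψ (α j) = 0 := by rw [sub_mul, one_mul, ← hinv, sub_self]
  exact (mul_eq_zero.mp this).resolve_left (sub_ne_zero.mpr hψc)

theorem sum_zpow_apply_eq_zero_of_range_eq_squares {n : ℕ} {χ : MulChar F K}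
    (hχ : orderOf χ = 2 * n) (hα : Function.Injective α)
    (hrange : Set.range α = {x | x ≠ 0 ∧ IsSquare x}) {m : ℤ} (hm : ¬ (n : ℤ) ∣ m) :
    ∑ j, (χ ^ m) (α j) = 0 := by
  have hnontriv := (MulChar.zpow_sq_eq_one_iff hχ m).not.mpr hm
  rw [MulChar.sq_eq_one_iff_forall_isSquare] at hnontriv
  push Not at hnontriv
  obtain ⟨x, hx0, hxs, hx⟩ := hnontriv
  exact sum_mulChar_eq_zero_of_range_eq_squares hα hrange hx0 hxs hx

end SquareEnumeration

section CharZpowMatrix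

variable {F K : Type*} [Field F] [Field K] {n : ℕ} {χ : MulChar F K} {α : Fin n → F}

variable (χ α) in
noncomputable def charZpowMatrix (s : ℤ) : Matrix (Fin n) (Fin n) K :=
  Matrix.of fun j k => (χ ^ ((k : ℕ) + s : ℤ)) (α j)

variable (χ) in
theorem mul_charZpowMatrix (hα : Function.Injective α)
    (hrange : Set.range α = {x | x ≠ 0 ∧ IsSquare x}) (r : ℕ) (s : ℤ) :
    Matrix.of (fun i j => (χ ^ r) (α i + α j)) * charZpowMatrix χ α s =
      charZpowMatrix χ α (s + r) *
        Matrix.diagonal fun k : Fin n =>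
          ∑ j, (χ ^ r) (1 + α j) * (χ ^ ((k : ℕ) + s : ℤ)) (α j) := by
  ext i k
  obtain ⟨hi0, his⟩ := mem_of_range_eq_squares hrange i
  rw [Matrix.mul_apply, Matrix.mul_diagonal]
  simp only [charZpowMatrix, Matrix.of_apply, Finset.mul_sum]
  rw [← sum_comp_mul_of_range_eq_squares hα hrange hi0 his
    fun x => (χ ^ r) (α i + x) * (χ ^ ((k : ℕ) + s : ℤ)) x]
  refine Finset.sum_congr rfl fun j _ => ?_
  rw [show α i + α i * α j = α i * (1 + α j) by ring, ← add_assoc,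
    zpow_add χ ((k : ℕ) + s : ℤ) r, zpow_natCast, MulChar.mul_apply, map_mul, map_mul]
  ring

-- The last column needs `χ^(n+s-1) = χ^(s-1)` on squares.
theorem charZpowMatrix_submatrix_finRotate (hχ : orderOf χ = 2 * n)
    (hrange : Set.range α = {x | x ≠ 0 ∧ IsSquare x}) (s : ℤ) :
    (charZpowMatrix χ α (s - 1)).submatrix id (finRotate n) = charZpowMatrix χ α s := by
  ext j k
  simp only [charZpowMatrix, Matrix.submatrix_apply, Matrix.of_apply, id]
  obtain ⟨hj0, hjs⟩ := mem_of_range_eq_squares hrange j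
  cases n with
  | zero => exact k.elim0
  | succ m =>
    rw [coe_finRotate]
    split_ifs with hk
    · rw [← MulChar.zpow_add_apply_of_isSquare hχ _ hj0 hjs, hk]
      push_cast
      ring_nf
    · push_cast
      ring_nf

theorem det_charZpowMatrix_eq_neg_one_pow_mul (hχ : orderOf χ = 2 * n)
    (hrange : Set.range α = {x | x ≠ 0 ∧ IsSquare x}) (s : ℤ) (t : ℕ) :
    (charZpowMatrix χ α s).det = (-1) ^ ((n - 1) * t) * (charZpowMatrix χ α (s - t)).det := by
  induction t generalizing s with
  | zero => simp
  | succ t ih =>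
    rw [ih, ← charZpowMatrix_submatrix_finRotate hχ hrange (s - t), Matrix.det_permute',
      sign_finRotate]
    push_cast
    ring_nf

theorem det_charZpowMatrix_ne_zero [CharZero K] (hχ : orderOf χ = 2 * n)
    (hα : Function.Injective α) (hrange : Set.range α = {x | x ≠ 0 ∧ IsSquare x}) (s : ℤ) :
    (charZpowMatrix χ α s).det ≠ 0 := by
  let U : Matrix (Fin n) (Fin n) K := Matrix.of fun k j => (χ ^ (-((k : ℕ) + s) : ℤ)) (α j)
  have hU : U * charZpowMatrix χ α s = (n : K) • 1 := by
    ext k l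
    simp only [U, charZpowMatrix, Matrix.mul_apply, Matrix.of_apply, ← MulChar.mul_apply,
      ← zpow_add, Matrix.smul_apply, Matrix.one_apply, smul_eq_mul, mul_ite, mul_one, mul_zero]
    split_ifs with hkl
    · subst hkl
      simp only [neg_add_cancel, zpow_zero]
      rw [Finset.sum_congr rfl fun j _ =>
        MulChar.one_apply (isUnit_iff_ne_zero.mpr (mem_of_range_eq_squares hrange j).1)]
      simp
    · refine sum_zpow_apply_eq_zero_of_range_eq_squares hχ hα hrange fun hdvd => hkl (Fin.ext ?_)
      have := Int.eq_zero_of_abs_lt_dvd hdvd (abs_lt.mpr ⟨by omega, by omega⟩)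
      omega
  have hdet := congrArg Matrix.det hU
  rw [Matrix.det_mul, Matrix.det_smul, Matrix.det_one, mul_one, Fintype.card_fin] at hdet
  refine right_ne_zero_of_mul (a := U.det) ?_
  rw [hdet]
  exact_mod_cast Nat.pow_self_pos.ne'

end CharZpowMatrix

theorem stmt_3_general (F : Type) [Field F]
    (n : ℕ)
    (χ : MulChar F ℂ) (hχ : orderOf χ = 2 * n)
    (α : Fin n → F) (hαinj : Function.Injective α)
    (hαrange : Set.range α = {x : F | x ≠ 0 ∧ IsSquare x})
    (r : ℕ) :
    Matrix.det (Matrix.of fun i j : Fin n => (χ ^ r) (α i + α j)) =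
      (-1 : ℂ) ^ (r * (n - 1)) *
        ∏ k ∈ Finset.Icc 1 n,
          ∑ j : Fin n, (χ ^ r) (1 + α j) * (χ ^ ((k : ℤ) - (r : ℤ))) (α j) := by
  have hdet := congrArg Matrix.det (mul_charZpowMatrix χ hαinj hαrange r (1 - r))
  rw [Matrix.det_mul, Matrix.det_mul, Matrix.det_diagonal, sub_add_cancel,
    det_charZpowMatrix_eq_neg_one_pow_mul hχ hαrange 1 r, mul_comm (n - 1)] at hdet
  have hreindex : ∏ k : Fin n, ∑ j, (χ ^ r) (1 + α j) * (χ ^ ((k : ℕ) + (1 - r) : ℤ)) (α j) =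
      ∏ k ∈ Finset.Icc 1 n, ∑ j, (χ ^ r) (1 + α j) * (χ ^ ((k : ℤ) - r)) (α j) := by
    rw [← Fin.prod_univ_add_one_eq_prod_Icc]
    refine Finset.prod_congr rfl fun k _ => Finset.sum_congr rfl fun j _ => ?_
    push_cast
    ring_nf
  rw [← hreindex]
  refine mul_right_cancel₀ (det_charZpowMatrix_ne_zero hχ hαinj hαrange (1 - r)) ?_
  rw [hdet]
  ring

/-- Let `q = 2n+1` be an odd prime power, `χ` a generator of the group of complex-valued
multiplicative characters of `F_q`, `α` an enumeration of the nonzero squares of `F_q`, and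
`1 ≤ r ≤ q-2`. Then `S_q(r,1) = (-1)^{r(n-1)} ∏_{k=1}^n λ_k`, where
`λ_k = ∑_{j=1}^n χ^r(1+α_j) χ^{k-r}(α_j)`. -/
theorem stmt_3 (F : Type) [Field F] [Fintype F] [DecidableEq F]
    (n : ℕ) (hq : Fintype.card F = 2 * n + 1)
    (χ : MulChar F ℂ) (hχ : orderOf χ = 2 * n)
    (α : Fin n → F) (hαinj : Function.Injective α)
    (hαrange : Set.range α = {x : F | x ≠ 0 ∧ IsSquare x})
    (r : ℕ) (hr1 : 1 ≤ r) (hr2 : r ≤ 2 * n - 1) :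
    Matrix.det (Matrix.of fun i j : Fin n => (χ ^ r) (α i + α j)) =
      (-1 : ℂ) ^ (r * (n - 1)) *
        ∏ k ∈ Finset.Icc 1 n,
          ∑ j : Fin n, (χ ^ r) (1 + α j) * (χ ^ ((k : ℤ) - (r : ℤ))) (α j) :=
  stmt_3_general F n χ hχ α hαinj hαrange r
end

section
/- Let q = 2n+1 be an odd prime power and let r be an integer with 1 ≤ r ≤ q-2. Let A_q(r) be the n×n complex matrix [χ^r(α_i + α_j) · χ^{-r}(α_j)]_{1≤i,j≤n}. Then for each 1 ≤ k ≤ n, the vector v_k = (χ^k(α_1), χ^k(α_2), …, χ^k(α_n))^T satisfies A_q(r) · v_k = λ_k · v_k, where λ_k = Σ_{j=1}^{n} χ^r(1 + α_j) · χ^{k-r}(α_j). -/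
/-!
Multiplication by `α i` permutes the nonzero squares, so the substitution `α j ↦ α i * α j` in
the `i`-th entry of `A_q(r) v_k` turns `χ^r(α i + α j)` into `χ^r(α i) χ^r(1 + α j)`; the factors
`χ^{±r}(α i)` cancel and `χ^k(α i)` splits off, leaving `λ_k χ^k(α i)`.
-/

theorem MulChar.zpow_apply_add_mul_zpow_neg_apply_mul_zpow_apply {R R' : Type*} [CommSemiring R]
    [CommRing R'] (χ : MulChar R R') (r k : ℤ) (x y : R) :
    (χ ^ r) (x + x * y) * (χ ^ (-r)) (x * y) * (χ ^ k) (x * y) =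
      (χ ^ r) (1 + y) * (χ ^ (k - r)) y * (χ ^ k) x := by
  have hcomb : ∀ (a b : ℤ) (z : R), (χ ^ a) z * (χ ^ b) z = (χ ^ (a + b)) z := fun a b z => by
    rw [zpow_add, MulChar.mul_apply]
  rw [← mul_one_add]
  calc (χ ^ r) (x * (1 + y)) * (χ ^ (-r)) (x * y) * (χ ^ k) (x * y)
      = (χ ^ r) (1 + y) * ((χ ^ (-r)) y * (χ ^ k) y) *
          ((χ ^ r) x * ((χ ^ (-r)) x * (χ ^ k) x)) := by
        simp only [map_mul]; ring
    _ = (χ ^ r) (1 + y) * (χ ^ (k - r)) y * (χ ^ k) x := by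
        rw [hcomb (-r), hcomb (-r), hcomb r, add_neg_cancel_left, neg_add_eq_sub]

theorem Fintype.sum_comp_mul_left_of_mul_mem_range {ι M R : Type*} [Fintype ι] [Monoid M]
    [AddCommMonoid R] {α : ι → M} (hα : Function.Injective α) {a : M} (ha : IsLeftRegular a)
    (hmem : ∀ j, a * α j ∈ Set.range α) (f : M → R) :
    ∑ j, f (a * α j) = ∑ j, f (α j) := by
  choose g hg using hmem
  have hg_inj : g.Injective := fun j j' h =>
    hα (ha (show a * α j = a * α j' by rw [← hg, ← hg, h]))
  exact Fintype.sum_bijective g hg_inj.bijective_of_finite _ _ fun j => by rw [hg]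

theorem stmt_4_general (F : Type) [Field F] (n : ℕ) (χ : MulChar F ℂ)
    (α : Fin n → F) (hαinj : Function.Injective α)
    (hαrange : Set.range α = {x : F | x ≠ 0 ∧ IsSquare x})
    (r : ℕ) :
    ∀ k ∈ Finset.Icc 1 n,
      (Matrix.of fun i j : Fin n =>
          (χ ^ r) (α i + α j) * (χ ^ (-(r : ℤ))) (α j)).mulVec
          (fun i => (χ ^ k) (α i)) =
        fun i =>
          (∑ j : Fin n, (χ ^ r) (1 + α j) * (χ ^ ((k : ℤ) - (r : ℤ))) (α j)) *
            (χ ^ k) (α i) := by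
  intro k _
  funext i
  have hα_mem (j : Fin n) : α j ≠ 0 ∧ IsSquare (α j) :=
    (Set.ext_iff.mp hαrange (α j)).mp ⟨j, rfl⟩
  have hmul_mem (j : Fin n) : α i * α j ∈ Set.range α := by
    rw [hαrange]
    exact ⟨mul_ne_zero (hα_mem i).1 (hα_mem j).1, (hα_mem i).2.mul (hα_mem j).2⟩
  simp only [Matrix.mulVec, dotProduct, Matrix.of_apply, Finset.sum_mul, ← zpow_natCast]
  rw [← Fintype.sum_comp_mul_left_of_mul_mem_range hαinj
    (IsLeftCancelMulZero.mul_left_cancel_of_ne_zero (hα_mem i).1) hmul_mem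
    fun x => (χ ^ (r : ℤ)) (α i + x) * (χ ^ (-(r : ℤ))) x * (χ ^ (k : ℤ)) x]
  exact Fintype.sum_congr _ _ fun j =>
    MulChar.zpow_apply_add_mul_zpow_neg_apply_mul_zpow_apply χ r k (α i) (α j)

/-- Let `q = 2n+1` be an odd prime power, `χ` a generator of the group of complex-valued
multiplicative characters of `F_q`, `α` an enumeration of the nonzero squares of `F_q`, and
`1 ≤ r ≤ q-2`. For `A_q(r) = [χ^r(α_i+α_j) χ^{-r}(α_j)]` and each `1 ≤ k ≤ n`, the vector
`v_k = (χ^k(α_1), …, χ^k(α_n))ᵀ` satisfies `A_q(r) v_k = λ_k v_k`, where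
`λ_k = ∑_{j=1}^n χ^r(1+α_j) χ^{k-r}(α_j)`. -/
theorem stmt_4 (F : Type) [Field F] [Fintype F] [DecidableEq F]
    (n : ℕ) (hq : Fintype.card F = 2 * n + 1)
    (χ : MulChar F ℂ) (hχ : orderOf χ = 2 * n)
    (α : Fin n → F) (hαinj : Function.Injective α)
    (hαrange : Set.range α = {x : F | x ≠ 0 ∧ IsSquare x})
    (r : ℕ) (hr1 : 1 ≤ r) (hr2 : r ≤ 2 * n - 1) :
    ∀ k ∈ Finset.Icc 1 n,
      (Matrix.of fun i j : Fin n =>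
          (χ ^ r) (α i + α j) * (χ ^ (-(r : ℤ))) (α j)).mulVec
          (fun i => (χ ^ k) (α i)) =
        fun i =>
          (∑ j : Fin n, (χ ^ r) (1 + α j) * (χ ^ ((k : ℤ) - (r : ℤ))) (α j)) *
            (χ ^ k) (α i) :=
  stmt_4_general F n χ α hαinj hαrange r
end

section
/- Let q = 2n+1 be an odd prime power with char(F_q) > 3 and q ≡ 1 (mod 4), and let d ∈ F_q^×. Then there exists x ∈ F_q such that D(d,q) = d^{(q-1)/4} · x^2. -/
/-! Every `α i` is an `n`-th root of unity, so the binomial expansion of `(α i + d * α j) ^ (n + 1)`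
folds modulo `n` into `∑ a, α i ^ a * c a * α j ^ (1 - a)`. The matrix is therefore
`V * diagonal c * (V permuted)ᵀ` for the Vandermonde matrix `V` of `α`, and `D = ± det V ^ 2 * ∏ c`.
For `2 ≤ k < n` the coefficients `c k` and `c (n + 1 - k)` carry the same binomial, so they pair off
into squares times `d ^ (n + 1)`; together with `d ^ (2 * n) = 1` this gives
`∏ c = (d ^ (n + 1)) ^ (n / 2) * s ^ 2 = ± d ^ (n / 2) * s ^ 2`. The remaining sign is a square
because `-1` is a square when `q ≡ 1 (mod 4)`. -/

open Finset Matrix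

theorem Finset.prod_Ico_eq_prod_mul_reflect {M : Type*} [CommMonoid M] (f : ℕ → M) {a b : ℕ}
    (hab : a ≤ b) :
    ∏ k ∈ Ico a (2 * b - a), f k = ∏ k ∈ Ico a b, f k * f (2 * b - 1 - k) := by
  rcases Nat.eq_zero_or_pos b with rfl | hb
  · obtain rfl : a = 0 := by omega
    simp
  rw [prod_mul_distrib, prod_Ico_reflect f a (n := 2 * b - 1) (m := b) (by omega),
    show 2 * b - 1 + 1 - b = b by omega, show 2 * b - 1 + 1 - a = 2 * b - a by omega,
    prod_Ico_consecutive f hab (by omega)]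

theorem Matrix.det_of_sum_mul_mul_perm {ι R : Type*} [Fintype ι] [DecidableEq ι] [CommRing R]
    (u v : Matrix ι ι R) (c : ι → R) (σ : Equiv.Perm ι) :
    (of fun i j => ∑ a, u i a * c a * v j (σ a)).det = σ.sign * (u.det * v.det * ∏ a, c a) := by
  have hfactor : of (fun i j => ∑ a, u i a * c a * v j (σ a)) =
      u * diagonal c * (v.submatrix id σ)ᵀ := by
    ext i j
    rw [of_apply, mul_apply]
    simp only [mul_diagonal, transpose_apply, submatrix_apply, id]
  rw [hfactor, det_mul, det_mul, det_transpose, det_permute', det_diagonal]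
  ring

theorem IsSquare.of_sq_eq_one {R : Type*} [Ring R] [NoZeroDivisors R] (h : IsSquare (-1 : R))
    {x : R} (hx : x ^ 2 = 1) : IsSquare x := by
  rcases mul_self_eq_one_iff.mp (by rwa [pow_two] at hx) with rfl | rfl
  · exact IsSquare.one
  · exact h

section FoldedBinomial

variable {R : Type*} [CommRing R]

/-- The coefficient of `x ^ k * y ^ (1 - k)` in `(x + d * y) ^ (n + 1)` once exponents are read
modulo `n`: the binomial terms of index `n` and `n + 1` fold onto those of index `0` and `1`. -/
def foldedCoeff (n : ℕ) (d : R) (k : ℕ) : R :=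
  if k = 0 then d ^ (n + 1) + (n + 1) * d
  else if k = 1 then (n + 1) * d ^ n + 1
  else (n + 1).choose k * d ^ (n + 1 - k)

theorem add_mul_pow_succ_eq_sum_foldedCoeff {n : ℕ} (hn : 2 ≤ n) (d : R) {x y : R}
    (hx : x ^ n = 1) (hy : y ^ n = 1) :
    (x + d * y) ^ (n + 1) = ∑ k ∈ range n, x ^ k * foldedCoeff n d k * y ^ (n + 1 - k) := by
  obtain ⟨n, rfl⟩ : ∃ n', n = n' + 2 := ⟨n - 2, by omega⟩
  rw [add_pow, sum_range_succ, sum_range_succ, sum_range_succ', sum_range_succ',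
    sum_range_succ' _ (n + 1), sum_range_succ']
  have hmid : ∀ k ∈ range n, x ^ (k + 1 + 1) * (d * y) ^ (n + 2 + 1 - (k + 1 + 1)) *
      ((n + 2 + 1).choose (k + 1 + 1) : R) =
      x ^ (k + 1 + 1) * foldedCoeff (n + 2) d (k + 1 + 1) * y ^ (n + 2 + 1 - (k + 1 + 1)) := by
    intro k _
    rw [foldedCoeff, if_neg (by omega), if_neg (by omega), mul_pow]
    ring
  rw [sum_congr rfl hmid]
  simp only [foldedCoeff, zero_add, if_true, one_ne_zero, if_false, Nat.choose_self,
    Nat.choose_zero_right, Nat.choose_one_right, Nat.choose_succ_self_right, Nat.sub_zero,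
    Nat.sub_self, pow_zero, pow_one, mul_pow]
  rw [show n + 2 + 1 - 1 = n + 2 by omega, show n + 2 + 1 - (n + 2) = 1 by omega]
  push_cast
  linear_combination (x + (n + 3) * d * y) * (hx - hy)

theorem add_mul_pow_succ_eq_sum_fin {n : ℕ} [NeZero n] (hn : 2 ≤ n) (d : R) {x y : R}
    (hx : x ^ n = 1) (hy : y ^ n = 1) :
    (x + d * y) ^ (n + 1) =
      ∑ a : Fin n, x ^ (a : ℕ) * foldedCoeff n d a * y ^ ((1 - a : Fin n) : ℕ) := by
  rw [add_mul_pow_succ_eq_sum_foldedCoeff hn d hx hy,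
    ← Fin.sum_univ_eq_sum_range (fun k => x ^ k * foldedCoeff n d k * y ^ (n + 1 - k))]
  refine sum_congr rfl fun a _ => ?_
  rw [pow_eq_pow_mod _ hy, Fin.val_sub, Fin.val_one', Nat.mod_eq_of_lt (by omega : 1 < n)]
  congr 3
  omega

theorem det_of_add_mul_pow_succ {n : ℕ} [NeZero n] (hn : 2 ≤ n) (α : Fin n → R) (d : R)
    (hα : ∀ i, α i ^ n = 1) :
    (of fun i j => (α i + d * α j) ^ (n + 1)).det =
      Equiv.Perm.sign (Equiv.subLeft (1 : Fin n)) *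
        ((vandermonde α).det ^ 2 * ∏ k ∈ range n, foldedCoeff n d k) := by
  have hM : (of fun i j => (α i + d * α j) ^ (n + 1)) =
      of fun i j => ∑ a, vandermonde α i a * foldedCoeff n d a *
        vandermonde α j (Equiv.subLeft 1 a) := by
    ext i j
    exact add_mul_pow_succ_eq_sum_fin hn d (hα i) (hα j)
  rw [hM, det_of_sum_mul_mul_perm, Fin.prod_univ_eq_prod_range (fun k => foldedCoeff n d k), sq]

theorem foldedCoeff_zero_mul_foldedCoeff_one {n : ℕ} {d : R} (hd : (d ^ n) ^ 2 = 1) :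
    foldedCoeff n d 0 * foldedCoeff n d 1 = d ^ (n + 1) * (n + 1 + d ^ n) ^ 2 := by
  simp only [foldedCoeff, if_true, one_ne_zero, if_false]
  linear_combination -((n + 1) * d + d ^ (n + 1)) * hd

theorem foldedCoeff_mul_foldedCoeff_reflect {n k : ℕ} (d : R) (hk : 2 ≤ k) (hkn : k < n) :
    foldedCoeff n d k * foldedCoeff n d (n + 1 - k) = (n + 1).choose k ^ 2 * d ^ (n + 1) := by
  rw [foldedCoeff, foldedCoeff, if_neg (by omega), if_neg (by omega), if_neg (by omega),
    if_neg (by omega), Nat.choose_symm (by omega), Nat.sub_sub_self (by omega),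
    mul_mul_mul_comm, ← pow_add, Nat.sub_add_cancel (by omega), sq]

theorem exists_prod_foldedCoeff_eq {m : ℕ} {d : R} (hd : (d ^ (2 * m)) ^ 2 = 1) :
    ∃ s : R, ∏ k ∈ range (2 * m), foldedCoeff (2 * m) d k = (d ^ (2 * m + 1)) ^ m * s ^ 2 := by
  rcases Nat.eq_zero_or_pos m with rfl | hm
  · exact ⟨1, by simp⟩
  have hpairs := prod_Ico_eq_prod_mul_reflect (foldedCoeff (2 * m) d) (a := 2) (b := m + 1)
    (by omega)
  rw [show 2 * (m + 1) - 2 = 2 * m by omega] at hpairs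
  have hpair : ∀ k ∈ Ico 2 (m + 1),
      foldedCoeff (2 * m) d k * foldedCoeff (2 * m) d (2 * (m + 1) - 1 - k) =
        ((2 * m + 1).choose k : R) ^ 2 * d ^ (2 * m + 1) := fun k hk => by
    rw [mem_Ico] at hk
    rw [show 2 * (m + 1) - 1 - k = 2 * m + 1 - k by omega]
    exact_mod_cast foldedCoeff_mul_foldedCoeff_reflect d hk.1 (by omega)
  refine ⟨(2 * m + 1 + d ^ (2 * m)) * ∏ k ∈ Ico 2 (m + 1), ((2 * m + 1).choose k : R), ?_⟩
  rw [range_eq_Ico, prod_eq_prod_Ico_succ_bot (by omega), prod_eq_prod_Ico_succ_bot (by omega),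
    ← mul_assoc, foldedCoeff_zero_mul_foldedCoeff_one hd, hpairs, prod_congr rfl hpair,
    prod_mul_distrib, prod_pow, prod_const, Nat.card_Ico]
  obtain ⟨m, rfl⟩ : ∃ m', m = m' + 1 := ⟨m - 1, by omega⟩
  push_cast
  ring

end FoldedBinomial

theorem stmt_6_general (F : Type) [Field F] [Fintype F]
    (q n : ℕ) (hqn : q = 2 * n + 1) (hq : Fintype.card F = q)
    (hq4 : q % 4 = 1)
    (α : Fin n → F)
    (hαrange : Set.range α = {x : F | x ≠ 0 ∧ IsSquare x})
    (d : F) (hd : d ≠ 0) :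
    ∃ x : F,
      Matrix.det (Matrix.of fun i j : Fin n => (α i + d * α j) ^ ((q + 1) / 2)) =
        d ^ ((q - 1) / 4) * x ^ 2 := by
  obtain ⟨m, rfl⟩ : ∃ m, n = 2 * m := ⟨n / 2, by omega⟩
  have hm : 1 ≤ m := by
    have := hq ▸ Fintype.one_lt_card (α := F)
    omega
  have : NeZero (2 * m) := ⟨by omega⟩
  rw [show (q + 1) / 2 = 2 * m + 1 by omega, show (q - 1) / 4 = m by omega]
  have fermat (x : F) (hx : x ≠ 0) : (x ^ (2 * m)) ^ 2 = 1 := by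
    rw [← pow_mul, show 2 * m * 2 = Fintype.card F - 1 by omega]
    exact FiniteField.pow_card_sub_one_eq_one x hx
  have hα (i : Fin (2 * m)) : α i ^ (2 * m) = 1 := by
    obtain ⟨hne, y, hy⟩ : α i ∈ {x : F | x ≠ 0 ∧ IsSquare x} := hαrange ▸ Set.mem_range_self i
    rw [hy, ← sq, pow_right_comm]
    exact fermat y (by rintro rfl; exact hne (by simpa using hy))
  obtain ⟨s, hs⟩ := exists_prod_foldedCoeff_eq (fermat d hd)
  obtain ⟨r, hr⟩ :
      IsSquare ((Equiv.Perm.sign (Equiv.subLeft (1 : Fin (2 * m))) : F) * (d ^ (2 * m)) ^ m) :=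
    IsSquare.of_sq_eq_one (FiniteField.isSquare_neg_one_iff.2 (by omega)) (by
      rw [mul_pow, ← pow_mul, mul_comm m 2, pow_mul, fermat d hd, one_pow, mul_one,
        ← Int.cast_pow, ← Units.val_pow_eq_pow_val, Int.units_sq, Units.val_one, Int.cast_one])
  refine ⟨(vandermonde α).det * s * r, ?_⟩
  rw [det_of_add_mul_pow_succ (by omega) α d hα, hs, pow_succ, mul_pow]
  linear_combination ((vandermonde α).det ^ 2 * d ^ m * s ^ 2) * hr

/-- Let `q = 2n+1` be an odd prime power with `char F_q > 3` and `q ≡ 1 (mod 4)`, `α` an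
enumeration of the nonzero squares of `F_q`, and `d ∈ F_q^×`. Then there exists `x ∈ F_q` with
`D(d,q) = det [(α_i + d·α_j)^{(q+1)/2}] = d^{(q-1)/4} x²`. -/
theorem stmt_6 (F : Type) [Field F] [Fintype F] [DecidableEq F]
    (q n : ℕ) (hqn : q = 2 * n + 1) (hq : Fintype.card F = q)
    (hchar : 3 < ringChar F) (hq4 : q % 4 = 1)
    (α : Fin n → F) (hαinj : Function.Injective α)
    (hαrange : Set.range α = {x : F | x ≠ 0 ∧ IsSquare x})
    (d : F) (hd : d ≠ 0) :
    ∃ x : F,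
      Matrix.det (Matrix.of fun i j : Fin n => (α i + d * α j) ^ ((q + 1) / 2)) =
        d ^ ((q - 1) / 4) * x ^ 2 :=
  stmt_6_general F q n hqn hq hq4 α hαrange d hd
end

section
/- Let q = 2n+1 be an odd prime power with char(F_q) > 3 and q ≡ 3 (mod 4), and let d ∈ F_q^×. Then there exists y ∈ F_q such that D(d,q) = d^{(q+1)/4} · (-1)^{(q-3)/4} · C((q+1)/2, (q+1)/4) · y^2, where C((q+1)/2, (q+1)/4) is the binomial coefficient, regarded as an element of F_q via the natural map ℕ → F_q. -/
/-!
A nonzero square `α` of `F_q` satisfies `α ^ n = 1`, so in the binomial expansion of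
`(α_i + d α_j) ^ (n + 1)` the monomials `α_i ^ n` and `α_i ^ (n + 1)` fold back onto `1` and
`α_i`. The matrix therefore factors as `V(α) * B` with `B k j = γ_k α_j ^ (n + 1 - k)`, and `B`
is a reversed Vandermonde matrix up to the factors `γ_k` of its rows and `α_j ^ 2` of its
columns; this gives `D = (-1) ^ C(n, 2) * ∏ γ_k * (∏ α_j * det V(α)) ^ 2`.

Only `γ_0` and `γ_1` receive two terms; since `ε = d ^ n = ±1` their product is
`d ^ (n + 1) * (1 + (n + 1) ε) ^ 2`. The other `γ_k` are `C(n + 1, k) d ^ (n + 1 - k)`; by the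
symmetry of the binomial coefficients their product is `C(n + 1, (n + 1) / 2)` times a square
(dividing by `(n + 1) ^ 2`, which is invertible as `2 (n + 1) = q + 1`), and for `q ≡ 3 (mod 4)`
the total power of `d` is `d ^ ((q + 1) / 4)` times a square.
-/

open Finset Matrix

namespace Nat

theorem prod_range_choose_two_mul (m : ℕ) :
    ∏ k ∈ range (2 * m + 1), (2 * m).choose k =
      (2 * m).choose m * (∏ k ∈ range m, (2 * m).choose k) ^ 2 := by
  have hsymm : ∏ k ∈ range m, (2 * m).choose (m + 1 + k) = ∏ k ∈ range m, (2 * m).choose k := by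
    rw [← prod_range_reflect]
    refine prod_congr rfl fun k hk => ?_
    rw [mem_range] at hk
    rw [← choose_symm (by omega)]
    congr 1
    omega
  rw [show 2 * m + 1 = m + 1 + m by ring, prod_range_add, prod_range_succ, hsymm]
  ring

theorem prod_range_choose_eq_sq_mul (m : ℕ) :
    ∏ k ∈ range (m + 4), (m + 3).choose k =
      (m + 3) ^ 2 * ∏ k ∈ range m, (m + 3).choose (k + 2) := by
  rw [prod_range_succ, prod_range_succ, prod_range_succ', prod_range_succ', choose_self,
    choose_succ_self_right, choose_one_right, choose_zero_right]
  ring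

theorem sum_range_succ_sub_mul_two (m : ℕ) : (∑ k ∈ range m, (m + 1 - k)) * 2 = m * (m + 3) := by
  induction m with
  | zero => simp
  | succ m ih =>
    have hshift : ∑ k ∈ range m, (m + 1 + 1 - k) = ∑ k ∈ range m, (m + 1 - k) + m := by
      have hk : ∀ k ∈ range m, m + 1 + 1 - k = (m + 1 - k) + 1 := fun k hk => by
        rw [mem_range] at hk; omega
      rw [sum_congr rfl hk, sum_add_distrib, sum_const, card_range, smul_eq_mul, mul_one]
    rw [sum_range_succ, hshift]
    ring_nf at ih ⊢
    omega

end Nat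

section CyclicBinomial

variable {R : Type*} [CommRing R] {n : ℕ}

/-- The coefficient of `X ^ k` in `(X + d) ^ (n + 1)` reduced modulo `X ^ n - 1`, for `k < n`
and `2 ≤ n`; the second summand vanishes unless `k ≤ 1`, so the truncated `1 - k` is harmless. -/
def cyclicBinomialCoeff (n : ℕ) (d : R) (k : ℕ) : R :=
  (n + 1).choose k * d ^ (n + 1 - k) + (n + 1).choose (n + k) * d ^ (1 - k)

theorem add_pow_succ_eq_sum_cyclicBinomialCoeff {x : R} (hx : x ^ n = 1) (hn : 2 ≤ n) (u : R) :
    (x + u) ^ (n + 1) = ∑ k ∈ range n, x ^ k * cyclicBinomialCoeff n u k := by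
  set f : ℕ → R := fun l => x ^ l * u ^ (n + 1 - l) * (n + 1).choose l
  have hfold : ∀ k, x ^ (n + k) * u ^ (n + 1 - (n + k)) = x ^ k * u ^ (1 - k) := fun k => by
    rw [pow_add, hx, one_mul, Nat.sub_add_eq, Nat.add_sub_cancel_left]
  have htail : ∑ l ∈ range (n + n), f l = ∑ l ∈ range (n + 1 + 1), f l := by
    refine (sum_subset (range_subset_range.mpr (by omega)) fun l _ hl => ?_).symm
    rw [mem_range, not_lt] at hl
    simp [f, Nat.choose_eq_zero_of_lt (show n + 1 < l by omega)]
  rw [add_pow, ← htail, sum_range_add, ← sum_add_distrib]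
  refine sum_congr rfl fun k _ => ?_
  simp only [f, cyclicBinomialCoeff, hfold]
  ring

theorem cyclicBinomialCoeff_mul {y : R} (hy : y ^ n = 1) (d : R) (k : ℕ) :
    cyclicBinomialCoeff n (d * y) k = cyclicBinomialCoeff n d k * y ^ (n + 1 - k) := by
  have hy' :
      (n + 1).choose (n + k) * y ^ (1 - k) = (n + 1).choose (n + k) * y ^ (n + 1 - k) := by
    rcases Nat.lt_or_ge k 2 with hk | hk
    · rw [show n + 1 - k = n + (1 - k) by omega, pow_add, hy, one_mul]
    · rw [Nat.choose_eq_zero_of_lt (by omega), Nat.cast_zero, zero_mul, zero_mul]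
  simp only [cyclicBinomialCoeff, mul_pow]
  linear_combination d ^ (1 - k) * hy'

theorem of_pow_add_mul_eq_vandermonde_mul {α : Fin n → R} (hα : ∀ i, α i ^ n = 1) (hn : 2 ≤ n)
    (d : R) :
    of (fun i j => (α i + d * α j) ^ (n + 1)) =
      vandermonde α * of fun (k j : Fin n) => cyclicBinomialCoeff n d k * α j ^ (n + 1 - k) := by
  ext i j
  rw [of_apply, add_pow_succ_eq_sum_cyclicBinomialCoeff (hα i) hn, mul_apply,
    ← Fin.sum_univ_eq_sum_range (fun k => α i ^ k * cyclicBinomialCoeff n (d * α j) k)]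
  simp only [vandermonde_apply, of_apply, cyclicBinomialCoeff_mul (hα j)]

theorem Fin.sum_card_Ioi (n : ℕ) : ∑ i : Fin n, #(Ioi i) = n.choose 2 := by
  simp only [Fin.card_Ioi]
  rw [Fin.sum_univ_eq_sum_range (fun i => n - 1 - i), sum_range_reflect (fun i => i),
    sum_range_id, Nat.choose_two_right]

theorem det_projVandermonde_one_left (v : Fin n → R) :
    (projVandermonde 1 v).det = (-1) ^ n.choose 2 * (vandermonde v).det := by
  have hflip : ∀ i : Fin n,
      ∏ j ∈ Ioi i, (v i - v j) = (-1) ^ #(Ioi i) * ∏ j ∈ Ioi i, (v j - v i) := fun i => by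
    rw [← prod_neg]
    simp only [neg_sub]
  simp only [det_projVandermonde, det_vandermonde, Pi.one_apply, one_mul, hflip,
    prod_mul_distrib, prod_pow_eq_pow_sum, Fin.sum_card_Ioi]

theorem det_of_pow_succ_sub (α : Fin n → R) :
    (of fun (k j : Fin n) => α j ^ (n + 1 - k)).det =
      (-1) ^ n.choose 2 * (∏ j, α j) ^ 2 * (vandermonde α).det := by
  have h : (of fun (k j : Fin n) => α j ^ (n + 1 - k)) =
      (of fun i j => α i ^ 2 * projVandermonde 1 α i j)ᵀ := by
    ext k j
    rw [transpose_apply, of_apply, of_apply, projVandermonde_apply, Pi.one_apply, one_pow,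
      one_mul, Fin.val_rev, ← pow_add]
    congr 1
    omega
  rw [h, det_transpose, det_mul_column, det_projVandermonde_one_left, prod_pow]
  ring

theorem det_pow_add_mul {α : Fin n → R} (hα : ∀ i, α i ^ n = 1) (hn : 2 ≤ n) (d : R) :
    (of fun i j => (α i + d * α j) ^ (n + 1)).det =
      (-1) ^ n.choose 2 * (∏ k ∈ range n, cyclicBinomialCoeff n d k) *
        ((∏ j, α j) * (vandermonde α).det) ^ 2 := by
  have hB := det_mul_column (fun k : Fin n => cyclicBinomialCoeff n d k)
    (of fun k j => α j ^ (n + 1 - k))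
  simp only [of_apply] at hB
  rw [of_pow_add_mul_eq_vandermonde_mul hα hn, det_mul, hB, det_of_pow_succ_sub,
    Fin.prod_univ_eq_prod_range (cyclicBinomialCoeff n d)]
  ring

theorem prod_range_cyclicBinomialCoeff (m : ℕ) (d : R) :
    ∏ k ∈ range (m + 2), cyclicBinomialCoeff (m + 2) d k =
      cyclicBinomialCoeff (m + 2) d 0 * cyclicBinomialCoeff (m + 2) d 1 *
        ∏ k ∈ range m, ((m + 3).choose (k + 2) * d ^ (m + 1 - k)) := by
  have hhigh : ∀ k ∈ range m, cyclicBinomialCoeff (m + 2) d (k + 1 + 1) =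
      (m + 3).choose (k + 2) * d ^ (m + 1 - k) := fun k _ => by
    rw [cyclicBinomialCoeff,
      Nat.choose_eq_zero_of_lt (show m + 2 + 1 < m + 2 + (k + 1 + 1) by omega), Nat.cast_zero,
      zero_mul, add_zero, show m + 2 + 1 - (k + 1 + 1) = m + 1 - k by omega]
  rw [prod_range_succ', prod_range_succ', prod_congr rfl hhigh]
  ring

theorem cyclicBinomialCoeff_zero_mul_one {d : R} (hε : (d ^ n) ^ 2 = 1) :
    cyclicBinomialCoeff n d 0 * cyclicBinomialCoeff n d 1 =
      d ^ (n + 1) * (1 + (n + 1) * d ^ n) ^ 2 := by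
  simp only [cyclicBinomialCoeff, Nat.choose_zero_right, Nat.choose_succ_self_right, add_zero,
    Nat.choose_one_right, Nat.choose_self, Nat.sub_zero, Nat.sub_self, Nat.add_sub_cancel,
    pow_zero, pow_one]
  push_cast
  linear_combination (-d * (1 + (n + 1) * d ^ n) * (n + 1)) * hε

theorem prod_cyclicBinomialCoeff_eq_mul_sq (s : ℕ) {d : R} (hc : ((2 * s + 4 : ℕ) : R) * 2 = 1)
    (hε : (d ^ (2 * s + 3)) ^ 2 = 1) :
    ∃ z, ∏ k ∈ range (2 * s + 3), cyclicBinomialCoeff (2 * s + 3) d k =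
      d ^ (s + 2) * ((2 * s + 4).choose (s + 2) : R) * z ^ 2 := by
  set P := ∏ k ∈ range (s + 2), ((2 * s + 4).choose k : R)
  have hbinom : ∏ k ∈ range (2 * s + 1), ((2 * s + 4).choose (k + 2) : R) =
      (2 * s + 4).choose (s + 2) * (2 * P) ^ 2 := by
    have h := Nat.prod_range_choose_eq_sq_mul (2 * s + 1)
    rw [show 2 * s + 1 + 4 = 2 * (s + 2) + 1 by ring, show 2 * s + 1 + 3 = 2 * (s + 2) by ring,
      Nat.prod_range_choose_two_mul] at h
    have h' := congrArg (Nat.cast : ℕ → R) h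
    push_cast at h' hc ⊢
    linear_combination (-4) * h' -
      (∏ k ∈ range (2 * s + 1), ((2 * (s + 2)).choose (k + 2) : R)) * (1 + 2 * (2 * s + 4)) * hc
  have hexp : ∑ k ∈ range (2 * s + 1), (2 * s + 1 + 1 - k) = (2 * s + 1) * (s + 2) := by
    have := Nat.sum_range_succ_sub_mul_two (2 * s + 1)
    rw [show (2 * s + 1) * (2 * s + 1 + 3) = (2 * s + 1) * (s + 2) * 2 by ring] at this
    omega
  refine ⟨(1 + (2 * s + 4 : ℕ) * d ^ (2 * s + 3)) * (2 * P) * d ^ ((s + 2) * (s + 1)), ?_⟩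
  rw [prod_range_cyclicBinomialCoeff (2 * s + 1), cyclicBinomialCoeff_zero_mul_one hε,
    prod_mul_distrib, prod_pow_eq_pow_sum, hexp, hbinom]
  push_cast
  ring

end CyclicBinomial

theorem neg_one_pow_choose_two_two_mul_add_three {R : Type*} [Monoid R] [HasDistribNeg R]
    (s : ℕ) : (-1 : R) ^ (2 * s + 3).choose 2 = (-1) ^ (s + 1) := by
  have h : (2 * s + 3) * (2 * s + 3 - 1) = (s + 1 + 2 * ((s + 1) * (s + 1))) * 2 := by
    rw [show 2 * s + 3 - 1 = 2 * s + 2 by omega]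
    ring
  rw [Nat.choose_two_right, Nat.div_eq_of_eq_mul_left two_pos h, pow_add, pow_mul, neg_one_sq,
    one_pow, mul_one]

theorem stmt_8_general (F : Type) [Field F] [Fintype F]
    (q n : ℕ) (hqn : q = 2 * n + 1) (hq : Fintype.card F = q)
    (hchar : 3 < ringChar F) (hq4 : q % 4 = 3)
    (α : Fin n → F)
    (hαrange : Set.range α = {x : F | x ≠ 0 ∧ IsSquare x})
    (d : F) (hd : d ≠ 0) :
    ∃ y : F,
      Matrix.det (Matrix.of fun i j : Fin n => (α i + d * α j) ^ ((q + 1) / 2)) =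
        d ^ ((q + 1) / 4) * (-1 : F) ^ ((q - 3) / 4) *
          (Nat.choose ((q + 1) / 2) ((q + 1) / 4) : F) * y ^ 2 := by
  have hqF : (q : F) = 0 := hq ▸ FiniteField.cast_card_eq_zero F
  have hq3 : q ≠ 3 := by
    rintro rfl
    have := Nat.le_of_dvd (by norm_num) ((CharP.cast_eq_zero_iff F (ringChar F) 3).1 hqF)
    omega
  obtain ⟨s, rfl⟩ : ∃ s, n = 2 * s + 3 := ⟨(n - 3) / 2, by omega⟩
  subst hqn
  have hhalf : Fintype.card F / 2 = 2 * s + 3 := by omega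
  have hchar2 : ringChar F ≠ 2 := by omega
  have hα : ∀ i, α i ^ (2 * s + 3) = 1 := fun i => by
    obtain ⟨hne, hsq⟩ : α i ≠ 0 ∧ IsSquare (α i) := hαrange.subset (Set.mem_range_self i)
    rwa [← hhalf, ← FiniteField.isSquare_iff hchar2 hne]
  have hε : (d ^ (2 * s + 3)) ^ 2 = 1 := by
    rcases FiniteField.pow_dichotomy hchar2 hd with h | h <;> rw [← hhalf, h] <;> norm_num
  have hc : ((2 * s + 4 : ℕ) : F) * 2 = 1 := by
    push_cast at hqF ⊢
    linear_combination hqF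
  obtain ⟨z, hz⟩ := prod_cyclicBinomialCoeff_eq_mul_sq s hc hε
  refine ⟨z * ((∏ j, α j) * (vandermonde α).det), ?_⟩
  rw [show (2 * (2 * s + 3) + 1 + 1) / 2 = 2 * s + 3 + 1 by omega,
    show (2 * (2 * s + 3) + 1 + 1) / 4 = s + 2 by omega,
    show (2 * (2 * s + 3) + 1 - 3) / 4 = s + 1 by omega,
    det_pow_add_mul hα (by omega), hz, neg_one_pow_choose_two_two_mul_add_three]
  ring

/-- Let `q = 2n+1` be an odd prime power with `char F_q > 3` and `q ≡ 3 (mod 4)`, `α` an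
enumeration of the nonzero squares of `F_q`, and `d ∈ F_q^×`. Then there exists `y ∈ F_q` with
`D(d,q) = det [(α_i + d·α_j)^{(q+1)/2}] = d^{(q+1)/4} (-1)^{(q-3)/4} C((q+1)/2,(q+1)/4) y²`,
where the binomial coefficient is regarded in `F_q`. -/
theorem stmt_8 (F : Type) [Field F] [Fintype F] [DecidableEq F]
    (q n : ℕ) (hqn : q = 2 * n + 1) (hq : Fintype.card F = q)
    (hchar : 3 < ringChar F) (hq4 : q % 4 = 3)
    (α : Fin n → F) (hαinj : Function.Injective α)
    (hαrange : Set.range α = {x : F | x ≠ 0 ∧ IsSquare x})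
    (d : F) (hd : d ≠ 0) :
    ∃ y : F,
      Matrix.det (Matrix.of fun i j : Fin n => (α i + d * α j) ^ ((q + 1) / 2)) =
        d ^ ((q + 1) / 4) * (-1 : F) ^ ((q - 3) / 4) *
          (Nat.choose ((q + 1) / 2) ((q + 1) / 4) : F) * y ^ 2 :=
  stmt_8_general F q n hqn hq hchar hq4 α hαrange d hd
end

section
/- Let p > 3 be a prime with p ≡ 1 (mod 4) and let d be an integer with p ∤ d. Then the Legendre symbol of D(d,p) satisfies (D(d,p)/p) = (d/p)^{(p-1)/4}. -/
/-!
Modulo `p`, Euler's criterion turns the entry `a · (a/p)` into `a ^ (n + 1)` with `n = (p-1)/2`,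
where `a = xᵢ + δ xⱼ`, `xᵢ = i²` and `xᵢ ^ n = 1`. Expanding `(X + Z) ^ (n + 1)` binomially and
reducing exponents with `X ^ n = 1`, `Z ^ n = δ ^ n = ε = ±1` factors the matrix as
`V(x) · diag(e) · P · V(δx)ᵀ`, with `V` a Vandermonde matrix and `P` the permutation `k ↦ 1 - k`
of `ℤ/n`. Hence `D ≡ ± (∏ eₖ) · δ ^ (n(n-1)/2) · det V(x)²`. As `p ≡ 1 (mod 4)`, `-1` is a square,
and `∏ eₖ` is `ε` times a square because `∏ₖ C(n+1, k) = ((n+1)! ^ ((n+2)/2) / ∏ₖ k!)²`.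
So `(D/p) = (δ/p) ^ (n(n-1)/2) = (δ/p) ^ ((p-1)/4)`.
-/

open Finset Matrix Nat

section Fold

variable {R : Type*} [CommRing R]

def foldPerm (n : ℕ) [NeZero n] : Equiv.Perm (Fin n) := Equiv.subLeft 1

lemma foldPerm_val {n : ℕ} [NeZero n] (hn : 2 ≤ n) (k : Fin n) :
    (foldPerm n k : ℕ) = (n + 1 - k) % n := by
  rw [foldPerm, Equiv.subLeft_apply, Fin.val_sub, Fin.val_one',
    Nat.mod_eq_of_lt (by omega : 1 < n)]
  congr 1
  omega

/-- `ε + (n + 1)` collects `Z ^ (n + 1) = ε Z` and `(n + 1) X ^ n Z`; `(n + 1) ε + 1` collects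
`(n + 1) X Z ^ n` and `X ^ (n + 1)`. -/
def foldCoeff (n : ℕ) (ε : R) (k : ℕ) : R :=
  if k = 0 then ε + (n + 1) else if k = 1 then (n + 1) * ε + 1 else (n + 1).choose k

lemma add_pow_succ_eq_sum_foldCoeff {n : ℕ} [NeZero n] (hn : 2 ≤ n) {X : R} (hX : X ^ n = 1)
    (Z : R) :
    (X + Z) ^ (n + 1) =
      ∑ k : Fin n, X ^ (k : ℕ) * foldCoeff n (Z ^ n) k * Z ^ (foldPerm n k : ℕ) := by
  simp only [foldPerm_val hn]
  rw [Fin.sum_univ_eq_sum_range (fun k => X ^ k * foldCoeff n (Z ^ n) k * Z ^ ((n + 1 - k) % n)),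
    add_pow, sum_range_succ, sum_range_succ]
  obtain ⟨m, rfl⟩ := Nat.exists_eq_add_of_le' hn
  simp only [sum_range_succ' _ (m + 1), sum_range_succ' _ m]
  have hmid : ∑ k ∈ range m,
        X ^ (k + 1 + 1) * Z ^ (m + 2 + 1 - (k + 1 + 1)) * ((m + 2 + 1).choose (k + 1 + 1) : R) =
      ∑ k ∈ range m, X ^ (k + 1 + 1) * foldCoeff (m + 2) (Z ^ (m + 2)) (k + 1 + 1) *
        Z ^ ((m + 2 + 1 - (k + 1 + 1)) % (m + 2)) := by
    refine sum_congr rfl fun k hk => ?_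
    rw [mem_range] at hk
    rw [foldCoeff, if_neg (by omega), if_neg (by omega), Nat.mod_eq_of_lt (by omega)]
    ring
  rw [hmid, show (m + 2 + 1 - (0 + 1)) % (m + 2) = 0 by simp,
    show (m + 2 + 1 - 0) % (m + 2) = 1 by simp [Nat.add_mod_left]]
  simp only [foldCoeff, Nat.add_sub_cancel, Nat.sub_zero, Nat.sub_self, Nat.add_sub_cancel_left]
  norm_num
  linear_combination (X + ((m : R) + 3) * Z) * hX

lemma of_add_pow_succ_eq {n : ℕ} [NeZero n] (hn : 2 ≤ n) {x z : Fin n → R} {ε : R}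
    (hx : ∀ i, x i ^ n = 1) (hz : ∀ j, z j ^ n = ε) :
    of (fun i j => (x i + z j) ^ (n + 1)) =
      vandermonde x * diagonal (fun k : Fin n => foldCoeff n ε k) *
        (vandermonde z)ᵀ.submatrix (foldPerm n) id := by
  ext i j
  rw [of_apply, add_pow_succ_eq_sum_foldCoeff hn (hx i), hz j, mul_apply]
  simp only [mul_diagonal, vandermonde_apply, submatrix_apply, transpose_apply, id]

lemma det_of_add_pow_succ {n : ℕ} [NeZero n] (hn : 2 ≤ n) {x z : Fin n → R} {ε : R}
    (hx : ∀ i, x i ^ n = 1) (hz : ∀ j, z j ^ n = ε) :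
    det (of fun i j => (x i + z j) ^ (n + 1)) =
      Equiv.Perm.sign (foldPerm n) * (∏ k : Fin n, foldCoeff n ε k) *
        (det (vandermonde x) * det (vandermonde z)) := by
  rw [of_add_pow_succ_eq hn hx hz, det_mul, det_mul, det_diagonal, det_permute, det_transpose]
  ring

lemma vandermonde_const_mul {n : ℕ} (c : R) (x : Fin n → R) :
    vandermonde (fun i => c * x i) = vandermonde x * diagonal (fun k : Fin n => c ^ (k : ℕ)) := by
  ext i k
  rw [mul_diagonal, vandermonde_apply, vandermonde_apply, mul_pow, mul_comm]

lemma det_vandermonde_const_mul {n : ℕ} (c : R) (x : Fin n → R) :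
    det (vandermonde fun i => c * x i) = c ^ (n * (n - 1) / 2) * det (vandermonde x) := by
  rw [vandermonde_const_mul, det_mul, det_diagonal, prod_pow_eq_pow_sum,
    Fin.sum_univ_eq_sum_range (fun k => k) n, sum_range_id, mul_comm]

lemma prod_foldCoeff_mul_sq {n : ℕ} (hn : 2 ≤ n) {ε : R} (hε : ε ^ 2 = 1) :
    (∏ k : Fin n, foldCoeff n ε k) * (n + 1) ^ 2 =
      ε * (ε + (n + 1)) ^ 2 * ∏ k ∈ range (n + 2), ((n + 1).choose k : R) := by
  rw [Fin.prod_univ_eq_prod_range (fun k => foldCoeff n ε k), prod_range_succ, prod_range_succ]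
  obtain ⟨m, rfl⟩ := Nat.exists_eq_add_of_le' hn
  have hmid : ∏ k ∈ range m, foldCoeff (m + 2) ε (k + 1 + 1) =
      ∏ k ∈ range m, ((m + 2 + 1).choose (k + 1 + 1) : R) :=
    prod_congr rfl fun k _ => by rw [foldCoeff, if_neg (by omega), if_neg (by omega)]
  simp only [prod_range_succ' _ (m + 1), prod_range_succ' _ m, hmid]
  set P := ∏ k ∈ range m, ((m + 2 + 1).choose (k + 1 + 1) : R)
  simp only [foldCoeff]
  norm_num
  linear_combination (-(((m : R) + 3) ^ 2 * P * (ε + (m + 3)))) * hε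

end Fold

lemma prod_choose_mul_prod_factorial_sq (m : ℕ) :
    (∏ k ∈ range (m + 1), m.choose k) * (∏ k ∈ range (m + 1), k !) ^ 2 = m ! ^ (m + 1) := by
  have hrefl : ∏ k ∈ range (m + 1), (m - k)! = ∏ k ∈ range (m + 1), k ! :=
    prod_range_reflect (fun k => k !) (m + 1)
  calc (∏ k ∈ range (m + 1), m.choose k) * (∏ k ∈ range (m + 1), k !) ^ 2
      = ∏ k ∈ range (m + 1), m.choose k * k ! * (m - k)! := by
        rw [sq, prod_mul_distrib, prod_mul_distrib, hrefl, mul_assoc]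
    _ = m ! ^ (m + 1) := by
        rw [prod_congr rfl fun k hk => choose_mul_factorial_mul_factorial
          (Nat.lt_succ_iff.mp (mem_range.mp hk)), prod_const, card_range]

lemma exists_sq_eq_prod_choose {K : Type*} [Field K] {m : ℕ} (hm : Odd m) (h : (m ! : K) ≠ 0) :
    ∃ r : K, r ≠ 0 ∧ ∏ k ∈ range (m + 1), (m.choose k : K) = r ^ 2 := by
  obtain ⟨s, rfl⟩ := hm
  have hF : ∏ k ∈ range (2 * s + 1 + 1), (k ! : K) ≠ 0 :=
    prod_ne_zero_iff.mpr fun k hk => fun h0 => h <| by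
      obtain ⟨c, hc⟩ := factorial_dvd_factorial (Nat.lt_succ_iff.mp (mem_range.mp hk))
      rw [hc, cast_mul, h0, zero_mul]
  refine ⟨(2 * s + 1)! ^ (s + 1) / ∏ k ∈ range (2 * s + 1 + 1), (k ! : K),
    div_ne_zero (pow_ne_zero _ h) hF, ?_⟩
  rw [div_pow, eq_div_iff (pow_ne_zero _ hF), ← pow_mul, show (s + 1) * 2 = 2 * s + 1 + 1 by ring]
  have key := congrArg (Nat.cast : ℕ → K) (prod_choose_mul_prod_factorial_sq (2 * s + 1))
  push_cast at key
  exact key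

lemma mul_pred_div_two_mod_two {n : ℕ} (hn : Even n) : n * (n - 1) / 2 % 2 = n / 2 % 2 := by
  obtain ⟨t, rfl⟩ : ∃ t, n = 2 * t := hn.two_dvd
  rcases Nat.eq_zero_or_pos t with rfl | ht
  · rfl
  rw [show 2 * t * (2 * t - 1) = 2 * (t * (2 * t - 1)) by ring,
    Nat.mul_div_cancel_left _ two_pos, Nat.mul_div_cancel_left _ two_pos, Nat.mul_mod,
    show (2 * t - 1) % 2 = 1 by omega]
  omega

section ZModPrime

variable {p : ℕ}

lemma natCast_ne_zero_of_pos_of_lt {a : ℕ} (h0 : 0 < a) (h : a < p) : (a : ZMod p) ≠ 0 :=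
  fun ha => absurd (Nat.le_of_dvd h0 ((ZMod.natCast_eq_zero_iff a p).mp ha)) (by omega)

variable [Fact p.Prime]

lemma sq_natCast_succ_injective {n : ℕ} (h : 2 * n < p) :
    Function.Injective fun i : Fin n => ((i : ℕ) + 1 : ZMod p) ^ 2 := by
  intro i j hij
  rcases sq_eq_sq_iff_eq_or_eq_neg.mp hij with hij | hij
  · have hcast : (((i : ℕ) + 1 : ℕ) : ZMod p) = (((j : ℕ) + 1 : ℕ) : ZMod p) := by
      push_cast; exact hij
    rw [ZMod.natCast_eq_natCast_iff', Nat.mod_eq_of_lt (by omega),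
      Nat.mod_eq_of_lt (by omega)] at hcast
    exact Fin.ext (by omega)
  · refine absurd ?_ (natCast_ne_zero_of_pos_of_lt (p := p) (a := i + 1 + (j + 1))
      (by omega) (by omega))
    push_cast
    linear_combination hij

lemma quadraticChar_eq_one_of_sq_eq_one (hp : p % 4 = 1) {u : ZMod p} (hu : u ^ 2 = 1) :
    quadraticChar (ZMod p) u = 1 := by
  rcases sq_eq_one_iff.mp hu with rfl | rfl
  · exact map_one _
  · exact (quadraticChar_one_iff_isSquare (neg_ne_zero.mpr one_ne_zero)).mpr
      (ZMod.exists_sq_eq_neg_one_iff.mpr (by omega))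

lemma quadraticChar_prod_foldCoeff {n : ℕ} (hpn : p = 2 * n + 1) (hp4 : p % 4 = 1) (hp3 : 3 < p)
    {ε : ZMod p} (hε : ε ^ 2 = 1) :
    quadraticChar (ZMod p) (∏ k : Fin n, foldCoeff n ε k) = 1 := by
  have hm : (n + 1 : ZMod p) ≠ 0 := by
    exact_mod_cast natCast_ne_zero_of_pos_of_lt (p := p) (a := n + 1) (by omega) (by omega)
  have h2m : 2 * ((n : ZMod p) + 1) = 1 := by
    have hp0 : ((2 * n + 1 : ℕ) : ZMod p) = 0 := hpn ▸ ZMod.natCast_self p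
    push_cast at hp0
    linear_combination hp0
  -- `ε = ±1` and `n + 1 = 1/2`, so `ε + (n + 1)` is `3/2` or `-1/2`.
  have hεm : ε + (n + 1) ≠ 0 := by
    intro h
    have h3 : ((3 : ℕ) : ZMod p) ≠ 0 := natCast_ne_zero_of_pos_of_lt (by omega) hp3
    rcases sq_eq_one_iff.mp hε with rfl | rfl
    · exact h3 (by push_cast; linear_combination 2 * h - h2m)
    · exact one_ne_zero (by linear_combination h2m - 2 * h : (1 : ZMod p) = 0)
  obtain ⟨r, hr, hC⟩ := exists_sq_eq_prod_choose (K := ZMod p) (m := n + 1)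
    (by rw [Nat.odd_add_one, Nat.not_odd_iff_even]; exact ⟨n / 2, by omega⟩)
    (fun h => absurd ((Nat.Prime.dvd_factorial Fact.out).mp
      ((ZMod.natCast_eq_zero_iff (n + 1)! p).mp h)) (by omega))
  have key := congrArg (quadraticChar (ZMod p)) (prod_foldCoeff_mul_sq (n := n) (by omega) hε)
  rw [hC, map_mul, map_mul, map_mul, map_pow, map_pow, quadraticChar_sq_one hm,
    quadraticChar_sq_one hεm, quadraticChar_sq_one' hr,
    quadraticChar_eq_one_of_sq_eq_one hp4 hε] at key
  simpa using key

lemma quadraticChar_det_sq_add_mul_sq_pow {n : ℕ} (hpn : p = 2 * n + 1) (hp4 : p % 4 = 1)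
    (hp3 : 3 < p) {δ : ZMod p} (hδ : δ ≠ 0) :
    quadraticChar (ZMod p) (det (of fun i j : Fin n =>
        (((i : ℕ) + 1 : ZMod p) ^ 2 + δ * ((j : ℕ) + 1 : ZMod p) ^ 2) ^ (n + 1))) =
      quadraticChar (ZMod p) δ ^ (n * (n - 1) / 2) := by
  have : NeZero n := ⟨by omega⟩
  set x : Fin n → ZMod p := fun i => ((i : ℕ) + 1 : ZMod p) ^ 2
  have hpow : ∀ {a : ZMod p}, a ≠ 0 → a ^ (2 * n) = 1 := fun ha =>
    (show p - 1 = 2 * n by omega) ▸ ZMod.pow_card_sub_one_eq_one ha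
  have hx : ∀ i, x i ^ n = 1 := fun i => by
    rw [← pow_mul, hpow]
    exact_mod_cast natCast_ne_zero_of_pos_of_lt (p := p) (a := i + 1) (by omega) (by omega)
  have hV : det (vandermonde x) ≠ 0 :=
    det_vandermonde_ne_zero_iff.mpr (sq_natCast_succ_injective (by omega))
  have hsign : ((Equiv.Perm.sign (foldPerm n) : ℤ) : ZMod p) ^ 2 = 1 := by
    rw [← Int.cast_pow, ← Units.val_pow_eq_pow_val, Int.units_sq, Units.val_one, Int.cast_one]
  change quadraticChar (ZMod p) (det (of fun i j => (x i + δ * x j) ^ (n + 1))) = _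
  rw [det_of_add_pow_succ (by omega) hx (z := fun j => δ * x j) (ε := δ ^ n)
      fun j => by rw [mul_pow, hx, mul_one],
    det_vandermonde_const_mul, map_mul, map_mul, map_mul, map_mul, map_pow,
    quadraticChar_eq_one_of_sq_eq_one hp4 hsign,
    quadraticChar_prod_foldCoeff hpn hp4 hp3 (by rw [← pow_mul, mul_comm, hpow hδ])]
  linear_combination quadraticChar (ZMod p) δ ^ (n * (n - 1) / 2) * quadraticChar_sq_one hV

end ZModPrime

/-- Let `p > 3` be a prime with `p ≡ 1 (mod 4)` and `d` an integer with `p ∤ d`. Then the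
Legendre symbol of `D(d,p) = det [(i² + d·j²)·((i² + d·j²)/p)]_{1 ≤ i,j ≤ (p-1)/2}` satisfies
`(D(d,p)/p) = (d/p)^{(p-1)/4}`. -/
theorem stmt_10 (p : ℕ) [Fact p.Prime] (hp3 : 3 < p) (hp4 : p % 4 = 1)
    (d : ℤ) (hd : ¬ (p : ℤ) ∣ d) :
    legendreSym p
        (Matrix.det (Matrix.of fun i j : Fin ((p - 1) / 2) =>
          (((i : ℤ) + 1) ^ 2 + d * ((j : ℤ) + 1) ^ 2) *
            legendreSym p (((i : ℤ) + 1) ^ 2 + d * ((j : ℤ) + 1) ^ 2))) =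
      legendreSym p d ^ ((p - 1) / 4) := by
  set n := (p - 1) / 2
  have hpn : p = 2 * n + 1 := by omega
  have hδ : (d : ZMod p) ≠ 0 := by rwa [Ne, ZMod.intCast_zmod_eq_zero_iff_dvd]
  have hcast : ((Matrix.det (Matrix.of fun i j : Fin n =>
      (((i : ℤ) + 1) ^ 2 + d * ((j : ℤ) + 1) ^ 2) *
        legendreSym p (((i : ℤ) + 1) ^ 2 + d * ((j : ℤ) + 1) ^ 2)) : ℤ) : ZMod p) =
      det (of fun i j : Fin n =>
        (((i : ℕ) + 1 : ZMod p) ^ 2 + (d : ZMod p) * ((j : ℕ) + 1 : ZMod p) ^ 2) ^ (n + 1)) := by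
    rw [Int.cast_det]
    congr 1
    ext i j
    simp only [map_apply, of_apply, Int.cast_mul, legendreSym.eq_pow, show p / 2 = n by omega]
    push_cast
    ring
  have hexp : n * (n - 1) / 2 % 2 = (p - 1) / 4 % 2 := by
    rw [mul_pred_div_two_mod_two ⟨n / 2, by omega⟩, show n / 2 = (p - 1) / 4 by omega]
  have hsq : legendreSym p d ^ 2 = 1 := quadraticChar_sq_one hδ
  rw [legendreSym, hcast, quadraticChar_det_sq_add_mul_sq_pow hpn hp4 hp3 hδ]
  change legendreSym p d ^ _ = _
  rw [pow_eq_pow_mod _ hsq, hexp, ← pow_eq_pow_mod _ hsq]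
end

section
/- Let q = 2n+1 be an odd prime power and let d ∈ F_q^×. The map σ_d : x ↦ d²·x is a permutation of the set F_q^{×2} of nonzero squares of F_q, and its sign satisfies sgn(σ_d) = φ(d)^{n-1}, where φ(d) = 1 if d is a square in F_q^× and φ(d) = -1 otherwise. -/
/-!
The units of `F_q` form a cyclic group `⟨g⟩` of order `2n`, so multiplication by `g²` permutes
the `n` nonzero squares in a single cycle of length `n`, which has sign `(-1)^(n-1)`.
Since `d ↦ sgn σ_d` is a homomorphism into `{±1}`, it is trivial on squares, and every non-square
is `g` times a square, so it takes the value `sgn σ_g` there.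
-/

open Equiv Subgroup

theorem Equiv.Perm.sign_eq_neg_one_pow_orderOf_sub_one {α : Type*} [DecidableEq α] [Fintype α]
    {f : Perm α} {x : α} (hx : ∀ y, f.SameCycle x y) :
    Perm.sign f = (-1) ^ (orderOf f - 1) := by
  rcases eq_or_ne f 1 with rfl | hf
  · simp
  obtain ⟨z, hz⟩ : ∃ z, f z ≠ z := by
    by_contra! h
    exact hf (Equiv.ext h)
  have hcycle : f.IsCycle := ⟨z, hz, fun y _ => (hx z).symm.trans (hx y)⟩
  obtain ⟨k, hk⟩ := Nat.exists_eq_add_of_le hcycle.two_le_card_support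
  rw [hcycle.sign, hcycle.orderOf, hk, add_comm, pow_succ]
  simp

theorem MonoidHom.map_eq_one_of_isSquare {G : Type*} [Monoid G] (χ : G →* ℤˣ) {d : G}
    (hd : IsSquare d) : χ d = 1 := by
  obtain ⟨e, rfl⟩ := hd
  rw [map_mul, Int.units_mul_self]

theorem MonoidHom.map_eq_of_not_isSquare {G : Type*} [Group G] {g : G}
    (hg : ∀ x, x ∈ zpowers g) (χ : G →* ℤˣ) {d : G} (hd : ¬IsSquare d) : χ d = χ g := by
  obtain ⟨k, rfl⟩ := mem_zpowers_iff.1 (hg d)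
  obtain ⟨m, rfl | rfl⟩ := Int.even_or_odd' k
  · exact absurd ⟨g ^ m, by rw [two_mul, zpow_add]⟩ hd
  · rw [map_zpow, zpow_add_one, zpow_mul, zpow_ofNat, Int.units_sq, one_zpow, one_mul]

theorem Units.isSquare_mk0_iff {G₀ : Type*} [GroupWithZero G₀] {a : G₀} (ha : a ≠ 0) :
    IsSquare (Units.mk0 a ha) ↔ IsSquare a := by
  constructor
  · rintro ⟨u, hu⟩
    exact ⟨u, by simpa using congrArg Units.val hu⟩
  · rintro ⟨b, rfl⟩
    exact ⟨Units.mk0 b (left_ne_zero_of_mul ha), Units.ext rfl⟩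

theorem isSquare_sq_mul_iff {K : Type*} [CommGroupWithZero K] {c x : K} (hc : c ≠ 0) :
    IsSquare (c ^ 2 * x) ↔ IsSquare x := by
  refine ⟨fun h => ?_, (IsSquare.sq c).mul⟩
  simpa [hc] using h.div (IsSquare.sq c)

abbrev NonzeroSquares (F : Type*) [Field F] := {x : F // x ≠ 0 ∧ IsSquare x}

section NonzeroSquares

variable {F : Type*} [Field F]

def squareMul : Fˣ →* Perm (NonzeroSquares F) where
  toFun c := (Equiv.mulLeft₀ ((c : F) ^ 2) (pow_ne_zero 2 c.ne_zero)).subtypeEquiv fun x => by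
    simp [Equiv.mulLeft₀_apply, isSquare_sq_mul_iff c.ne_zero]
  map_one' := by ext; simp
  map_mul' c c' := by
    ext
    simp only [Units.val_mul, subtypeEquiv_apply, mulLeft₀_apply, Perm.coe_mul,
      Function.comp_apply]
    ring

@[simp]
theorem squareMul_apply (c : Fˣ) (x : NonzeroSquares F) :
    (squareMul c x : F) = (c : F) ^ 2 * x := rfl

theorem squareMul_eq_one_iff {c : Fˣ} : squareMul c = 1 ↔ c ^ 2 = 1 := by
  refine ⟨fun h => Units.ext ?_, fun h => Equiv.ext fun x => Subtype.ext ?_⟩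
  · simpa using congrArg Subtype.val (Equiv.ext_iff.1 h ⟨1, one_ne_zero, IsSquare.one⟩)
  · simp [← Units.val_pow_eq_pow_val, h]

theorem orderOf_squareMul (c : Fˣ) : orderOf (squareMul c) = orderOf (c ^ 2) :=
  orderOf_eq_orderOf_iff.2 fun k => by
    rw [← map_pow, squareMul_eq_one_iff, ← pow_mul, ← pow_mul, mul_comm]

theorem sameCycle_squareMul_one {g : Fˣ} (hg : ∀ x, x ∈ zpowers g) (y : NonzeroSquares F) :
    (squareMul g).SameCycle ⟨1, one_ne_zero, IsSquare.one⟩ y := by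
  obtain ⟨hy, v, hv⟩ := y.2
  obtain ⟨k, hk⟩ := mem_zpowers_iff.1 (hg (Units.mk0 v (right_ne_zero_of_mul (hv ▸ hy))))
  refine ⟨k, Subtype.ext ?_⟩
  rw [← map_zpow, squareMul_apply, hk]
  simp [sq, hv]

theorem sign_squareMul_of_forall_mem_zpowers [DecidableEq F] [DecidablePred (IsSquare : F → Prop)]
    [Fintype F] {n : ℕ} (hq : Fintype.card F = 2 * n + 1) {g : Fˣ} (hg : ∀ x, x ∈ zpowers g) :
    Perm.sign (squareMul g) = (-1) ^ (n - 1) := by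
  have hg2n : orderOf g = 2 * n := by
    rw [orderOf_eq_card_of_forall_mem_zpowers hg, Nat.card_eq_fintype_card, Fintype.card_units, hq]
    rfl
  rw [Perm.sign_eq_neg_one_pow_orderOf_sub_one (sameCycle_squareMul_one hg), orderOf_squareMul,
    orderOf_pow_of_dvd two_ne_zero (hg2n ▸ dvd_mul_right 2 n), hg2n,
    Nat.mul_div_cancel_left n two_pos]

end NonzeroSquares

/-- Let `q = 2n+1` be an odd prime power and `d ∈ F_q^×`. The map `σ_d : x ↦ d²·x` is a
permutation of the set of nonzero squares of `F_q`, and its sign is `φ(d)^{n-1}`, where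
`φ(d) = 1` if `d` is a square and `φ(d) = -1` otherwise. -/
theorem stmt_12 (F : Type) [Field F] [Fintype F] [DecidableEq F]
    [DecidablePred (IsSquare : F → Prop)]
    (n : ℕ) (hq : Fintype.card F = 2 * n + 1) (d : F) (hd : d ≠ 0) :
    ∃ σ : Equiv.Perm {x : F // x ≠ 0 ∧ IsSquare x},
      (∀ x, (↑(σ x) : F) = d ^ 2 * ↑x) ∧
        Equiv.Perm.sign σ = (if IsSquare d then (1 : ℤˣ) else -1) ^ (n - 1) := by
  obtain ⟨g, hg⟩ := IsCyclic.exists_generator (α := Fˣ)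
  refine ⟨squareMul (Units.mk0 d hd), fun x => rfl, ?_⟩
  split_ifs with hsq
  · rw [one_pow]
    exact (Perm.sign.comp squareMul).map_eq_one_of_isSquare ((Units.isSquare_mk0_iff hd).2 hsq)
  · rw [← sign_squareMul_of_forall_mem_zpowers hq hg]
    exact (Perm.sign.comp squareMul).map_eq_of_not_isSquare hg
      (mt (Units.isSquare_mk0_iff hd).1 hsq)
end

section
/- Let q = 2n+1 be an odd prime power. The map inv_q : x ↦ x^{-1} is a permutation of the set F_q^{×2} of nonzero squares of F_q, and its sign equals: (-1)^{(n-1)/2} if q ≡ 3 (mod 4); 1 if q ≡ 5 (mod 8); and -1 if q ≡ 1 (mod 8). -/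
/-!
Inversion is an involution of the `n` nonzero squares, so its sign is `(-1) ^ ((n - f) / 2)`,
where `f` counts its fixed points. These are the square roots `±1` of unity that are squares:
`f = 1` if `-1` is a nonsquare, i.e. `q ≡ 3 (mod 4)`, and `f = 2` otherwise, in which case
`(n - 2) / 2` is even exactly when `q ≡ 5 (mod 8)`.
-/

open Finset Function

section InvOnNonzeroSquares

variable (G₀ : Type*) [GroupWithZero G₀]

def invOnNonzeroSquares : Equiv.Perm {x : G₀ // x ≠ 0 ∧ IsSquare x} :=
  Involutive.toPerm (fun x => ⟨(x : G₀)⁻¹, inv_ne_zero x.2.1, x.2.2.inv⟩)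
    fun x => Subtype.ext (inv_inv (x : G₀))

lemma invOnNonzeroSquares_sq : invOnNonzeroSquares G₀ ^ 2 = 1 :=
  Equiv.ext fun x => Subtype.ext (inv_inv (x : G₀))

variable {K : Type*} [DivisionRing K]

lemma mem_fixedPoints_invOnNonzeroSquares {x : {x : K // x ≠ 0 ∧ IsSquare x}} :
    x ∈ fixedPoints (invOnNonzeroSquares K) ↔ (x : K) = 1 ∨ (x : K) = -1 := by
  rw [mem_fixedPoints, IsFixedPt, Subtype.ext_iff]
  change (x : K)⁻¹ = x ↔ _
  rw [inv_eq_self₀]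
  have := x.2.1
  tauto

end InvOnNonzeroSquares

namespace FiniteField

variable {F : Type*} [Field F] [Fintype F]

lemma card_sqrts_of_isSquare [DecidableEq F] (hF : ringChar F ≠ 2) {b : F} (hb0 : b ≠ 0)
    (hb : IsSquare b) : #{x : F | x ^ 2 = b} = 2 := by
  have := quadraticChar_card_sqrts hF b
  rw [(quadraticChar_one_iff_isSquare hb0).mpr hb, Set.toFinset_ofPred] at this
  omega

lemma two_mul_card_nonzero_isSquare [DecidableEq F] [DecidablePred (IsSquare : F → Prop)]
    (hF : ringChar F ≠ 2) :
    2 * Fintype.card {x : F // x ≠ 0 ∧ IsSquare x} = Fintype.card F - 1 := by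
  have hsq : ∀ x ∈ ({x | x ≠ 0} : Finset F), x ^ 2 ∈ ({b | b ≠ 0 ∧ IsSquare b} : Finset F) :=
    fun x hx => by simp_all [IsSquare.sq]
  have hfiber : ∀ b ∈ ({b | b ≠ 0 ∧ IsSquare b} : Finset F),
      #{x ∈ ({x | x ≠ 0} : Finset F) | x ^ 2 = b} = 2 := by
    intro b hb
    rw [mem_filter_univ] at hb
    refine Eq.trans (congrArg Finset.card ?_) (card_sqrts_of_isSquare hF hb.1 hb.2)
    ext x
    simp only [filter_filter, mem_filter_univ]
    exact and_iff_right_of_imp fun hx h0 => hb.1 (by rw [← hx, h0, zero_pow two_ne_zero])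
  rw [Fintype.card_subtype, ← card_univ, ← card_erase_of_mem (mem_univ 0), ← filter_ne',
    card_eq_sum_card_fiberwise hsq, sum_const_nat hfiber, mul_comm]

lemma card_fixedPoints_invOnNonzeroSquares [DecidableEq F] [DecidablePred (IsSquare : F → Prop)]
    (hF : ringChar F ≠ 2) :
    Fintype.card (fixedPoints (invOnNonzeroSquares F)) = if IsSquare (-1 : F) then 2 else 1 := by
  let one : {x : F // x ≠ 0 ∧ IsSquare x} := ⟨1, one_ne_zero, .one⟩
  rw [Fintype.card_eq_nat_card, Nat.card_coe_set_eq]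
  split_ifs with h
  · let negOne : {x : F // x ≠ 0 ∧ IsSquare x} := ⟨-1, neg_ne_zero.2 one_ne_zero, h⟩
    have hfix : fixedPoints (invOnNonzeroSquares F) = {one, negOne} := by
      ext x
      rw [mem_fixedPoints_invOnNonzeroSquares]
      simp [Subtype.ext_iff, one, negOne]
    rw [hfix, Set.ncard_pair]
    simpa [Subtype.ext_iff, one, negOne] using (Ring.neg_one_ne_one_of_char_ne_two hF).symm
  · have hfix : fixedPoints (invOnNonzeroSquares F) = {one} := by
      ext x
      simp only [mem_fixedPoints_invOnNonzeroSquares, Set.mem_singleton_iff, Subtype.ext_iff, one]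
      exact or_iff_left fun hx => h (hx ▸ x.2.2)
    rw [hfix, Set.ncard_singleton]

end FiniteField

/-- Let `q = 2n+1` be an odd prime power. The map `inv_q : x ↦ x⁻¹` is a permutation of the set
of nonzero squares of `F_q`, and its sign equals `(-1)^{(n-1)/2}` if `q ≡ 3 (mod 4)`, `1` if
`q ≡ 5 (mod 8)`, and `-1` if `q ≡ 1 (mod 8)`. -/
theorem stmt_14 (F : Type) [Field F] [Fintype F] [DecidableEq F]
    [DecidablePred (IsSquare : F → Prop)]
    (n : ℕ) (hq : Fintype.card F = 2 * n + 1) :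
    ∃ σ : Equiv.Perm {x : F // x ≠ 0 ∧ IsSquare x},
      (∀ x, (↑(σ x) : F) = (↑x : F)⁻¹) ∧
        (Equiv.Perm.sign σ : ℤ) =
          if (2 * n + 1) % 4 = 3 then (-1 : ℤ) ^ ((n - 1) / 2)
          else if (2 * n + 1) % 8 = 5 then 1
          else -1 := by
  have hF : ringChar F ≠ 2 := fun h => by
    have := FiniteField.even_card_iff_char_two.mp h
    omega
  have hcard : Fintype.card {x : F // x ≠ 0 ∧ IsSquare x} = n := by
    have := FiniteField.two_mul_card_nonzero_isSquare hF
    omega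
  refine ⟨invOnNonzeroSquares F, fun _ => rfl, ?_⟩
  rw [Equiv.Perm.sign_of_pow_two_eq_one (invOnNonzeroSquares_sq F),
    FiniteField.card_fixedPoints_invOnNonzeroSquares hF, hcard]
  simp only [FiniteField.isSquare_neg_one_iff, hq]
  push_cast
  simp only [neg_one_pow_eq_ite, Nat.even_iff]
  have : 1 < Fintype.card F := Fintype.one_lt_card
  split_ifs <;> first | rfl | omega
end

section
/- Let R be a commutative ring, let m be a positive integer, let p_0, p_1, …, p_{m-1} ∈ R, and set P(T) = p_{m-1}T^{m-1} + ⋯ + p_1 T + p_0 ∈ R[T]. Then for any X_1, …, X_m, Y_1, …, Y_m ∈ R, det[P(X_i·Y_j)]_{1≤i,j≤m} = (∏_{i=0}^{m-1} p_i) · ∏_{1≤i<j≤m} (X_i - X_j)(Y_i - Y_j). -/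
/-! The matrix `[P(X_i Y_j)]` factors as `V(X) · diag(p) · V(Y)ᵀ` with `V` the Vandermonde matrix,
so its determinant is `det V(X) · ∏ p_k · det V(Y)`; the two Vandermonde determinants multiply to
the stated product since their sign conventions cancel in each factor
`(X_j - X_i)(Y_j - Y_i) = (X_i - X_j)(Y_i - Y_j)`. -/

open Matrix

theorem Matrix.of_sum_mul_pow_eq_vandermonde_mul_diagonal_mul_transpose {R : Type*} [CommRing R]
    {m : ℕ} (p X Y : Fin m → R) :
    (of fun i j : Fin m => ∑ k : Fin m, p k * (X i * Y j) ^ (k : ℕ)) =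
      vandermonde X * diagonal p * (vandermonde Y)ᵀ := by
  ext i j
  simp only [of_apply, mul_apply, vandermonde_apply, diagonal_apply, mul_ite, mul_zero,
    Finset.sum_ite_eq', Finset.mem_univ, if_true, transpose_apply]
  exact Finset.sum_congr rfl fun k _ => by ring

theorem Finset.prod_Ioi_sub_mul_sub_swap {R : Type*} [CommRing R] {m : ℕ} (X Y : Fin m → R) :
    (∏ i : Fin m, ∏ j ∈ Ioi i, (X j - X i)) * ∏ i : Fin m, ∏ j ∈ Ioi i, (Y j - Y i) =
      ∏ i : Fin m, ∏ j ∈ Ioi i, (X i - X j) * (Y i - Y j) := by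
  simp only [← prod_mul_distrib]
  exact prod_congr rfl fun i _ => prod_congr rfl fun j _ => by ring

theorem stmt_15_general (R : Type) [CommRing R] (m : ℕ)
    (p : Fin m → R) (X Y : Fin m → R) :
    Matrix.det (Matrix.of fun i j : Fin m => ∑ k : Fin m, p k * (X i * Y j) ^ (k : ℕ)) =
      (∏ k : Fin m, p k) *
        ∏ i : Fin m, ∏ j ∈ Finset.Ioi i, (X i - X j) * (Y i - Y j) := by
  rw [of_sum_mul_pow_eq_vandermonde_mul_diagonal_mul_transpose, det_mul, det_mul, det_transpose,
    det_vandermonde, det_vandermonde, det_diagonal, ← Finset.prod_Ioi_sub_mul_sub_swap]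
  ring

/-- Let `R` be a commutative ring, `m` a positive integer,
`P(T) = p_{m-1}T^{m-1} + ⋯ + p_1 T + p_0 ∈ R[T]`, and `X_1, …, X_m, Y_1, …, Y_m ∈ R`. Then
`det [P(X_i·Y_j)]_{1 ≤ i,j ≤ m} = (∏_{i=0}^{m-1} p_i) · ∏_{i<j} (X_i - X_j)(Y_i - Y_j)`. -/
theorem stmt_15 (R : Type) [CommRing R] (m : ℕ) (hm : 0 < m)
    (p : Fin m → R) (X Y : Fin m → R) :
    Matrix.det (Matrix.of fun i j : Fin m => ∑ k : Fin m, p k * (X i * Y j) ^ (k : ℕ)) =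
      (∏ k : Fin m, p k) *
        ∏ i : Fin m, ∏ j ∈ Finset.Ioi i, (X i - X j) * (Y i - Y j) :=
  stmt_15_general R m p X Y
end
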